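/- arXiv:1810.00015 — 4 statements merged into one kernel-verified Lean document; each statement's English description precedes it below -/
import Mathlib

section
/- Let m ≥ 1 and q = 2^m. The code M_q^⊥ ⊆ F_q^{q+1} is an MDS code of parameters [q+1, 3, q−1]_q: it has exactly q³ codewords and minimum Hamming weight q−1. Moreover its weight distribution is: one codeword of weight 0, exactly (q³−q)/2 codewords of weight q−1, exactly q²−1 codewords of weight q, and exactly (q³−2q²+q)/2 codewords of weight q+1. -/
open Finset

private lemma pow_eq_one_card_le (K : Type) [Field K] [Fintype K] [DecidableEq K]
    (n : ℕ) (hn : 0 < n) :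
    (Finset.univ.filter fun x : K => x ^ n = 1).card ≤ n := by
  classical
  have hP : (Polynomial.X ^ n - Polynomial.C (1 : K)) ≠ 0 :=
    Polynomial.X_pow_sub_C_ne_zero hn 1
  have hsub : (Finset.univ.filter fun x : K => x ^ n = 1)
      ⊆ (Polynomial.X ^ n - Polynomial.C (1 : K)).roots.toFinset := by
    intro x hx
    simp only [Finset.mem_filter] at hx
    rw [Multiset.mem_toFinset, Polynomial.mem_roots hP]
    simp [Polynomial.IsRoot, sub_eq_zero, hx.2]
  calc (Finset.univ.filter fun x : K => x ^ n = 1).card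
      ≤ (Polynomial.X ^ n - Polynomial.C (1:K)).roots.toFinset.card :=
        Finset.card_le_card hsub
    _ ≤ Multiset.card (Polynomial.X ^ n - Polynomial.C (1:K)).roots :=
        Multiset.toFinset_card_le _
    _ ≤ (Polynomial.X ^ n - Polynomial.C (1:K)).natDegree := Polynomial.card_roots' _
    _ = n := Polynomial.natDegree_X_pow_sub_C

private lemma pow_q_eq_self_card_le (K : Type) [Field K] [Fintype K] [DecidableEq K]
    (n : ℕ) (hn : 1 < n) :
    (Finset.univ.filter fun x : K => x ^ n = x).card ≤ n := by
  classical
  have hdeg : (Polynomial.X ^ n - Polynomial.X : Polynomial K).natDegree = n := by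
    rw [Polynomial.natDegree_sub_eq_left_of_natDegree_lt] <;>
      simp [Polynomial.natDegree_X_pow, hn]
  have hP : (Polynomial.X ^ n - Polynomial.X : Polynomial K) ≠ 0 := by
    intro h
    rw [h, Polynomial.natDegree_zero] at hdeg
    omega
  have hsub : (Finset.univ.filter fun x : K => x ^ n = x)
      ⊆ (Polynomial.X ^ n - Polynomial.X : Polynomial K).roots.toFinset := by
    intro x hx
    simp only [Finset.mem_filter] at hx
    rw [Multiset.mem_toFinset, Polynomial.mem_roots hP]
    simp [Polynomial.IsRoot, sub_eq_zero, hx.2]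
  calc (Finset.univ.filter fun x : K => x ^ n = x).card
      ≤ (Polynomial.X ^ n - Polynomial.X : Polynomial K).roots.toFinset.card :=
        Finset.card_le_card hsub
    _ ≤ Multiset.card (Polynomial.X ^ n - Polynomial.X : Polynomial K).roots :=
        Multiset.toFinset_card_le _
    _ ≤ (Polynomial.X ^ n - Polynomial.X : Polynomial K).natDegree := Polynomial.card_roots' _
    _ = n := hdeg

private lemma char_two_of_card (K : Type) [Field K] [Fintype K] (m : ℕ)
    (h : Fintype.card K = 2 ^ m) : CharP K 2 := by
  obtain ⟨n, hp, hc⟩ := FiniteField.card K (ringChar K)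
  have hd : ringChar K ∣ 2 ^ m := by
    rw [← h, hc]
    exact dvd_pow_self (ringChar K) (by exact_mod_cast n.pos.ne')
  have h2 : ringChar K = 2 :=
    (Nat.prime_dvd_prime_iff_eq hp Nat.prime_two).mp (hp.dvd_of_dvd_pow hd)
  exact h2 ▸ ringChar.charP K

set_option maxHeartbeats 2000000 in
/-- Let `m ≥ 1`, `q = 2^m`, `F = F_q ⊆ K = F_{q²}`, `α` a primitive element of
`K`, `ζ = α^(q-1)`.  The code `M_q^⊥ = {(c + Tr_{K/F}(δ ζ^j))_{j=1,…,q+1} : c ∈ F, δ ∈ K}`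
is an MDS code of parameters `[q+1, 3, q-1]_q`: it has exactly `q³` codewords and minimum
Hamming weight `q − 1`; moreover it has one codeword of weight `0`, `(q³−q)/2` codewords of
weight `q−1`, `q²−1` codewords of weight `q`, and `(q³−2q²+q)/2` codewords of weight `q+1`. -/
theorem stmt_0 (m q : ℕ) (hm : 1 ≤ m) (hq : q = 2 ^ m)
    (F K : Type) [Field F] [Field K] [Fintype F] [Fintype K] [DecidableEq F] [Algebra F K]
    (hcF : Fintype.card F = q) (hcK : Fintype.card K = q ^ 2)
    (α : K) (hα : orderOf α = q ^ 2 - 1)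
    (ζ : K) (hζ : ζ = α ^ (q - 1))
    (Mdual : Set (Fin (q + 1) → F))
    (hM : Mdual = {w | ∃ (c : F) (δ : K), ∀ j : Fin (q + 1),
        w j = c + Algebra.trace F K (δ * ζ ^ ((j : ℕ) + 1))}) :
    Mdual.ncard = q ^ 3 ∧
    (∀ w ∈ Mdual, w ≠ 0 → q - 1 ≤ hammingNorm w) ∧
    {w ∈ Mdual | hammingNorm w = 0}.ncard = 1 ∧
    {w ∈ Mdual | hammingNorm w = q - 1}.ncard = (q ^ 3 - q) / 2 ∧
    {w ∈ Mdual | hammingNorm w = q}.ncard = q ^ 2 - 1 ∧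
    {w ∈ Mdual | hammingNorm w = q + 1}.ncard = (q ^ 3 - 2 * q ^ 2 + q) / 2 := by
  classical
  have hq2 : 2 ≤ q := by
    rw [hq]
    calc 2 = 2 ^ 1 := (pow_one 2).symm
    _ ≤ 2 ^ m := Nat.pow_le_pow_right (by norm_num) hm
  have hq1 : 1 ≤ q := by omega
  -- characteristic two
  haveI charK : CharP K 2 := char_two_of_card K (2 * m) (by rw [hcK, hq, ← pow_mul, mul_comm])
  haveI charF : CharP F 2 := char_two_of_card F m (by rw [hcF, hq])
  have h2K : (2 : K) = 0 := CharTwo.two_eq_zero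
  have h2F : (2 : F) = 0 := CharTwo.two_eq_zero
  have addK : ∀ x : K, x + x = 0 := CharTwo.add_self_eq_zero
  have addF : ∀ x : F, x + x = 0 := CharTwo.add_self_eq_zero
  have addcancelK : ∀ x y : K, x + y = 0 → x = y := by
    intro x y h
    have hx : x = -y := eq_neg_of_add_eq_zero_left h
    rwa [CharTwo.neg_eq] at hx
  have addcancelF : ∀ x y : F, x + y = 0 → x = y := by
    intro x y h
    have hx : x = -y := eq_neg_of_add_eq_zero_left h
    rwa [CharTwo.neg_eq] at hx
  -- Frobenius facts
  have frobK : ∀ x y : K, (x + y) ^ q = x ^ q + y ^ q := by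
    intro x y; rw [hq]; exact add_pow_char_pow x y 2 m
  have xK2 : ∀ x : K, x ^ (q ^ 2) = x := fun x => by rw [← hcK]; exact FiniteField.pow_card x
  have xKq : ∀ x : K, (x ^ q) ^ q = x := fun x => by
    have := xK2 x; rwa [pow_two, pow_mul] at this
  have aF : ∀ a : F, a ^ q = a := fun a => by rw [← hcF]; exact FiniteField.pow_card a
  have hAinj : Function.Injective (algebraMap F K) := (algebraMap F K).injective
  have AqK : ∀ a : F, (algebraMap F K a) ^ q = algebraMap F K a := fun a => by
    rw [← map_pow, aF]
  -- the subfield F' = fixed points of x ↦ x^q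
  have hFim : (univ.filter fun x : K => x ^ q = x) = univ.image (algebraMap F K) := by
    apply (Finset.eq_of_subset_of_card_le ?_ ?_).symm
    · intro x hx
      rw [mem_image] at hx
      obtain ⟨a, _, rfl⟩ := hx
      simp [AqK a]
    · rw [Finset.card_image_of_injective _ hAinj, card_univ, hcF]
      exact pow_q_eq_self_card_le K q hq2
  have memF' : ∀ x : K, x ^ q = x ↔ ∃ a : F, algebraMap F K a = x := by
    intro x
    constructor
    · intro hx
      have : x ∈ univ.filter fun x : K => x ^ q = x := by simp [hx]
      rw [hFim, mem_image] at this
      obtain ⟨a, _, ha⟩ := this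
      exact ⟨a, ha⟩
    · rintro ⟨a, rfl⟩; exact AqK a
  -- ζ has order q+1
  have hα1 : α ^ (q ^ 2 - 1) = 1 := hα ▸ pow_orderOf_eq_one α
  have hq4 : 4 ≤ q ^ 2 := by nlinarith
  have hαne : α ≠ 0 := by
    intro h
    rw [h, zero_pow (show q ^ 2 - 1 ≠ 0 by omega)] at hα1
    exact zero_ne_one hα1
  have e1 : (q - 1) * (q + 1) = q ^ 2 - 1 := by
    zify [hq1, show 1 ≤ q ^ 2 by omega]
    ring
  have hζq1 : ζ ^ (q + 1) = 1 := by
    rw [hζ, ← pow_mul, e1, hα1]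
  have hζne : ζ ≠ 0 := by
    intro h
    rw [h, zero_pow (show q + 1 ≠ 0 by omega)] at hζq1
    exact zero_ne_one hζq1
  have hζmin : ∀ k : ℕ, 0 < k → k < q + 1 → ζ ^ k ≠ 1 := by
    intro k hk hk' hke
    rw [hζ, ← pow_mul] at hke
    have hdvd := orderOf_dvd_of_pow_eq_one hke
    rw [hα, ← e1] at hdvd
    have := (Nat.mul_dvd_mul_iff_left (show 0 < q - 1 by omega)).mp hdvd
    exact absurd (Nat.le_of_dvd hk this) (by omega)
  have ζcancel : ∀ i j : ℕ, i < j → ζ ^ i = ζ ^ j → ζ ^ (j - i) = 1 := by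
    intro i j hij h
    have hzi : ζ ^ i ≠ 0 := pow_ne_zero _ hζne
    apply mul_left_cancel₀ hzi
    rw [mul_one, ← pow_add, show i + (j - i) = j by omega, h]
  have ζpow_inj : ∀ i j : ℕ, i < q + 1 → j < q + 1 → ζ ^ i = ζ ^ j → i = j := by
    intro i j hi hj hij
    rcases Nat.lt_trichotomy i j with h | h | h
    · exact absurd (ζcancel i j h hij) (hζmin _ (by omega) (by omega))
    · exact h
    · exact absurd (ζcancel j i h hij.symm) (hζmin _ (by omega) (by omega))
  have ζpow_inj1 : ∀ i j : ℕ, i < q + 1 → j < q + 1 → ζ ^ (i + 1) = ζ ^ (j + 1) → i = j := by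
    intro i j hi hj hij
    rcases Nat.lt_trichotomy i j with h | h | h
    · exact absurd (ζcancel (i+1) (j+1) (by omega) hij) (hζmin _ (by omega) (by omega))
    · exact h
    · exact absurd (ζcancel (j+1) (i+1) (by omega) hij.symm) (hζmin _ (by omega) (by omega))
  -- the set U of (q+1)-th roots of unity
  set U : Finset K := univ.filter (fun u : K => u ^ (q + 1) = 1) with hUdef
  have hUim : U = (range (q + 1)).image (ζ ^ ·) := by
    have himU : (range (q + 1)).image (ζ ^ ·) ⊆ U := by
      intro x hx
      rw [mem_image] at hx
      obtain ⟨i, _, rfl⟩ := hx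
      simp only [hUdef, mem_filter, mem_univ, true_and]
      rw [← pow_mul, mul_comm, pow_mul, hζq1, one_pow]
    have hcardim : ((range (q + 1)).image (ζ ^ ·)).card = q + 1 := by
      rw [Finset.card_image_of_injOn, card_range]
      intro i hi j hj
      exact ζpow_inj i j (mem_range.mp (mem_coe.mp hi)) (mem_range.mp (mem_coe.mp hj))
    apply (Finset.eq_of_subset_of_card_le himU ?_).symm
    rw [hcardim]
    exact pow_eq_one_card_le K (q + 1) (by omega)
  have hUcard : U.card = q + 1 := by
    rw [hUim, Finset.card_image_of_injOn, card_range]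
    intro i hi j hj
    exact ζpow_inj i j (mem_range.mp (mem_coe.mp hi)) (mem_range.mp (mem_coe.mp hj))
  have hUmem : ∀ u : K, u ∈ U ↔ u ^ (q + 1) = 1 := by
    intro u; simp [hUdef]
  have hUne0 : ∀ u : K, u ^ (q + 1) = 1 → u ≠ 0 := by
    intro u hu h
    rw [h, zero_pow (show q + 1 ≠ 0 by omega)] at hu
    exact zero_ne_one hu
  have hUinv : ∀ u : K, u ^ (q + 1) = 1 → u ^ q * u = 1 := by
    intro u hu
    rw [← pow_succ, hu]
  -- the trace is x ↦ μ (x + x^q)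
  haveI : Algebra.IsAlgebraic F K := Algebra.IsAlgebraic.of_finite F K
  have hfr : Module.finrank F K = 2 := by
    have hc := Module.card_eq_pow_finrank (K := F) (V := K)
    rw [hcF, hcK] at hc
    exact (Nat.pow_right_injective hq2 hc.symm)
  have trace_alg : ∀ a : F, Algebra.trace F K (algebraMap F K a) = 0 := by
    intro a
    rw [Algebra.trace_algebraMap, hfr, two_smul]
    exact addF a
  obtain ⟨x0, hx0⟩ := Algebra.trace_surjective F K (1 : F)
  set S : K → K := fun x => x + x ^ q with hS
  have hSq : ∀ x : K, (S x) ^ q = S x := by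
    intro x
    simp only [hS]
    rw [frobK, xKq, add_comm]
  have hSmul : ∀ a x : K, a ^ q = a → S (a * x) = a * S x := by
    intro a x ha
    simp only [hS]
    rw [mul_pow, ha, mul_add]
  have hSF : ∀ x : K, ∃ b : F, algebraMap F K b = S x := fun x => (memF' _).mp (hSq x)
  have htrS : ∀ x : K, S x = 0 → Algebra.trace F K x = 0 := by
    intro x h
    have hxq : x = x ^ q := addcancelK _ _ h
    obtain ⟨a, ha⟩ := (memF' x).mp hxq.symm
    rw [← ha, trace_alg]
  have hx0S : S x0 ≠ 0 := by
    intro h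
    rw [htrS x0 h] at hx0
    exact one_ne_zero hx0.symm
  have hTrKey : ∀ x : K, S x0 * algebraMap F K (Algebra.trace F K x) = S x := by
    intro x
    obtain ⟨a0, ha0⟩ := hSF x0
    obtain ⟨a1, ha1⟩ := hSF x
    have hadd : ∀ u v : K, S (u + v) = S u + S v := by
      intro u v
      simp only [hS]
      rw [frobK]
      ring
    have hy : S (S x0 * x + S x * x0) = 0 := by
      rw [hadd, hSmul _ _ (hSq x0), hSmul _ _ (hSq x), mul_comm (S x) (S x0)]
      exact addK _
    have htr0 : Algebra.trace F K (S x0 * x + S x * x0) = 0 := htrS _ hy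
    rw [← ha0, ← ha1] at htr0
    rw [show algebraMap F K a0 * x = a0 • x from (Algebra.smul_def a0 x).symm,
        show algebraMap F K a1 * x0 = a1 • x0 from (Algebra.smul_def a1 x0).symm,
        map_add, map_smul, map_smul, hx0, smul_eq_mul, smul_eq_mul, mul_one] at htr0
    have ha0t : a0 * Algebra.trace F K x = a1 := addcancelF _ _ htr0
    rw [← ha0, ← ha1, ← map_mul, ha0t]
  set μ : K := (S x0)⁻¹ with hμdef
  have hμ0 : μ ≠ 0 := inv_ne_zero hx0S
  have hμq : μ ^ q = μ := by rw [hμdef, inv_pow, hSq]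
  have hTr : ∀ x : K, algebraMap F K (Algebra.trace F K x) = μ * (x + x ^ q) := by
    intro x
    rw [hμdef, show x + x ^ q = S x from rfl, ← hTrKey x, inv_mul_cancel_left₀ hx0S]
  -- the root-counting function
  set Nf : K → K → Finset K := fun Cc D =>
    univ.filter (fun u : K => u ^ (q + 1) = 1 ∧ D * u ^ 2 + Cc * u + D ^ q = 0) with hNf
  have hmemN : ∀ Cc D u : K,
      u ∈ Nf Cc D ↔ (u ^ (q + 1) = 1 ∧ D * u ^ 2 + Cc * u + D ^ q = 0) := by
    intro Cc D u; simp [hNf]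
  -- a quadratic with three distinct roots is trivial
  have key3 : ∀ Cc D u1 u2 u3 : K, u1 ≠ u2 → u1 ≠ u3 → u2 ≠ u3 →
      D * u1 ^ 2 + Cc * u1 + D ^ q = 0 → D * u2 ^ 2 + Cc * u2 + D ^ q = 0 →
      D * u3 ^ 2 + Cc * u3 + D ^ q = 0 → Cc = 0 ∧ D = 0 := by
    intro Cc D u1 u2 u3 h12 h13 h23 e1' e2' e3'
    have f12 : (D * (u1 + u2) + Cc) * (u1 - u2) = 0 := by linear_combination e1' - e2'
    have f13 : (D * (u1 + u3) + Cc) * (u1 - u3) = 0 := by linear_combination e1' - e3'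
    have g12 : D * (u1 + u2) + Cc = 0 := by
      rcases mul_eq_zero.mp f12 with h | h
      · exact h
      · exact absurd (sub_eq_zero.mp h) h12
    have g13 : D * (u1 + u3) + Cc = 0 := by
      rcases mul_eq_zero.mp f13 with h | h
      · exact h
      · exact absurd (sub_eq_zero.mp h) h13
    have hD : D * (u2 - u3) = 0 := by linear_combination g12 - g13
    have hD0 : D = 0 := by
      rcases mul_eq_zero.mp hD with h | h
      · exact h
      · exact absurd (sub_eq_zero.mp h) h23
    refine ⟨?_, hD0⟩
    linear_combination g12 - (u1 + u2) * hD0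
  have NleU : ∀ Cc D : K, Nf Cc D ⊆ U := by
    intro Cc D u hu
    rw [hmemN] at hu
    exact (hUmem u).mpr hu.1
  have NlecardU : ∀ Cc D : K, (Nf Cc D).card ≤ q + 1 := by
    intro Cc D
    calc (Nf Cc D).card ≤ U.card := Finset.card_le_card (NleU Cc D)
      _ = q + 1 := hUcard
  have Nle2 : ∀ Cc D : K, ¬(Cc = 0 ∧ D = 0) → (Nf Cc D).card ≤ 2 := by
    intro Cc D hCD
    by_contra hc
    obtain ⟨a, ha, b, hb, c, hc', hab, hac, hbc⟩ :=
      Finset.two_lt_card.mp (show 2 < (Nf Cc D).card by omega)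
    rw [hmemN] at ha hb hc'
    exact hCD (key3 Cc D a b c hab hac hbc ha.2 hb.2 hc'.2)
  -- squaring is bijective
  have sqInj : ∀ x y : K, x ^ 2 = y ^ 2 → x = y := by
    intro x y h
    have h0 : (x - y) ^ 2 = 0 := by
      linear_combination h + (y ^ 2 - x * y) * h2K
    have h1 := pow_eq_zero_iff (n := 2) (by norm_num) |>.mp h0
    exact sub_eq_zero.mp h1
  have sqSurj : ∀ y : K, ∃ x : K, x ^ 2 = y := by
    have : Function.Surjective (fun x : K => x ^ 2) :=
      Finite.injective_iff_surjective.mp (fun x y h => sqInj x y h)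
    exact fun y => this y
  -- case analysis on the number of roots
  have C0 : Nf 0 0 = U := by
    ext u
    rw [hmemN, hUmem]
    simp [zero_pow (show q ≠ 0 by omega)]
  have C1 : ∀ Cc : K, Cc ≠ 0 → Nf Cc 0 = ∅ := by
    intro Cc hC
    rw [Finset.eq_empty_iff_forall_notMem]
    intro u hu
    rw [hmemN] at hu
    obtain ⟨hu1, hu2⟩ := hu
    rw [zero_mul, zero_add, zero_pow (show q ≠ 0 by omega), add_zero] at hu2
    rcases mul_eq_zero.mp hu2 with h | h
    · exact hC h
    · exact hUne0 u hu1 h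
  have C2 : ∀ D : K, D ≠ 0 → (Nf 0 D).card = 1 := by
    intro D hD
    obtain ⟨s, hs⟩ := sqSurj (D ^ (q - 1))
    have hDq : D ^ (q - 1) * D = D ^ q := by
      rw [← pow_succ, show q - 1 + 1 = q by omega]
    have hDU : (D ^ (q - 1)) ^ (q + 1) = 1 := by
      rw [← pow_mul, e1, ← hcK]
      exact FiniteField.pow_card_sub_one_eq_one D hD
    have hsU : s ^ (q + 1) = 1 := by
      apply sqInj
      rw [one_pow, pow_right_comm s (q + 1) 2, hs, hDU]
    have hroot : D * s ^ 2 + 0 * s + D ^ q = 0 := by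
      rw [hs, zero_mul, add_zero, mul_comm D (D ^ (q - 1)), hDq]
      exact addK _
    have : Nf 0 D = {s} := by
      ext u
      rw [hmemN, Finset.mem_singleton]
      constructor
      · rintro ⟨hu1, hu2⟩
        apply sqInj
        rw [hs]
        rw [zero_mul, add_zero] at hu2
        have h' : D * u ^ 2 = D ^ q := addcancelK _ _ hu2
        apply mul_left_cancel₀ hD
        rw [h', ← hDq, mul_comm]
      · rintro rfl
        exact ⟨hsU, hroot⟩
    rw [this, Finset.card_singleton]
  have C3 : ∀ Cc D : K, Cc ≠ 0 → D ≠ 0 → (Nf Cc D).card = 0 ∨ (Nf Cc D).card = 2 := by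
    intro Cc D hC hD
    rcases Finset.eq_empty_or_nonempty (Nf Cc D) with h | ⟨u, hu⟩
    · left; rw [h]; rfl
    · right
      rw [hmemN] at hu
      obtain ⟨hu1, hu2⟩ := hu
      have hu0 : u ≠ 0 := hUne0 u hu1
      have hut : u ^ q * u = 1 := hUinv u hu1
      have hDq : D ^ (q - 1) * D = D ^ q := by
        rw [← pow_succ, show q - 1 + 1 = q by omega]
      have hDU : (D ^ (q - 1)) ^ (q + 1) = 1 := by
        rw [← pow_mul, e1, ← hcK]
        exact FiniteField.pow_card_sub_one_eq_one D hD
      set u' : K := D ^ (q - 1) * u ^ q with hu'def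
      have hu'U : u' ^ (q + 1) = 1 := by
        rw [hu'def, mul_pow, hDU, one_mul, pow_right_comm, hu1, one_pow]
      have hE : u ^ 2 * (D * u' ^ 2 + Cc * u' + D ^ q) = 0 := by
        rw [hu'def]
        linear_combination (D * (D ^ (q-1)) ^ 2 * (u * u ^ q + 1) + Cc * u * D ^ (q-1)) * hut +
          (D ^ (q-1) - u ^ 2) * hDq + (D ^ (q-1)) * hu2
      have hroot' : D * u' ^ 2 + Cc * u' + D ^ q = 0 := by
        rcases mul_eq_zero.mp hE with h | h
        · exact absurd h (pow_ne_zero 2 hu0)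
        · exact h
      have hne : u' ≠ u := by
        intro heq
        have hru : D ^ (q - 1) = u ^ 2 := by
          have h1 : D ^ (q - 1) * u ^ q = u := heq
          linear_combination u * h1 - D ^ (q - 1) * hut
        have hCu : Cc * u = 0 := by
          linear_combination hu2 - hDq - D * hru - (D * u ^ 2 + D ^ q - D ^ (q-1) * D) * h2K
        rcases mul_eq_zero.mp hCu with h | h
        · exact hC h
        · exact hu0 h
      have hsub : {u, u'} ⊆ Nf Cc D := by
        intro x hx
        rcases Finset.mem_insert.mp hx with rfl | hx
        · rw [hmemN]; exact ⟨hu1, hu2⟩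
        · rw [Finset.mem_singleton.mp hx, hmemN]
          exact ⟨hu'U, hroot'⟩
      have hcard2 : ({u, u'} : Finset K).card = 2 := by
        rw [Finset.card_insert_of_notMem (by simpa using hne.symm), Finset.card_singleton]
      have := Finset.eq_of_subset_of_card_le hsub (by
        rw [hcard2]
        exact Nle2 Cc D (by rintro ⟨h, -⟩; exact hC h))
      rw [← this, hcard2]
  -- the core equivalence: vanishing of a codeword entry is a quadratic condition
  have hcore : ∀ (c : F) (δ : K) (i : ℕ),
      ((c + Algebra.trace F K (δ * ζ ^ (i + 1)) = 0) ↔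
        (μ * δ) * (ζ ^ (i + 1)) ^ 2 + (algebraMap F K c) * ζ ^ (i + 1) + (μ * δ) ^ q = 0) := by
    intro c δ i
    set u : K := ζ ^ (i + 1) with hu
    have huU : u ^ (q + 1) = 1 := by rw [hu, pow_right_comm, hζq1, one_pow]
    have hu0 : u ≠ 0 := hUne0 u huU
    have hut : u ^ q * u = 1 := hUinv u huU
    have hX : algebraMap F K (c + Algebra.trace F K (δ * u)) =
        algebraMap F K c + (μ * δ) * u + (μ * δ) ^ q * u ^ q := by
      rw [map_add, hTr, mul_pow δ u, mul_pow μ δ, hμq]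
      ring
    have hXu : (algebraMap F K c + (μ * δ) * u + (μ * δ) ^ q * u ^ q) * u =
        (μ * δ) * u ^ 2 + (algebraMap F K c) * u + (μ * δ) ^ q := by
      linear_combination ((μ * δ) ^ q) * hut
    have hiff1 : (c + Algebra.trace F K (δ * u) = 0) ↔
        (algebraMap F K c + (μ * δ) * u + (μ * δ) ^ q * u ^ q = 0) := by
      rw [← map_eq_zero_iff (algebraMap F K) hAinj, hX]
    have hiff2 : (algebraMap F K c + (μ * δ) * u + (μ * δ) ^ q * u ^ q = 0) ↔
        ((μ * δ) * u ^ 2 + (algebraMap F K c) * u + (μ * δ) ^ q = 0) := by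
      constructor
      · intro h; rw [← hXu, h, zero_mul]
      · intro h
        exact (mul_eq_zero.mp (hXu.trans h)).resolve_right hu0
    exact hiff1.trans hiff2
  -- the parametrization of the code
  set Φ : F × K → (Fin (q + 1) → F) :=
    fun p j => p.1 + Algebra.trace F K (p.2 * ζ ^ ((j : ℕ) + 1)) with hΦ
  have hMr : Mdual = Set.range Φ := by
    rw [hM]
    ext w
    constructor
    · rintro ⟨c, δ, h⟩
      exact ⟨(c, δ), by funext j; exact (h j).symm⟩
    · rintro ⟨⟨c, δ⟩, rfl⟩
      exact ⟨c, δ, fun j => rfl⟩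
  -- number of zero entries equals number of roots
  have hzero : ∀ p : F × K, (univ.filter fun j : Fin (q + 1) => Φ p j = 0).card
      = (Nf (algebraMap F K p.1) (μ * p.2)).card := by
    intro p
    refine Finset.card_bij (fun (j : Fin (q + 1)) _ => ζ ^ ((j : ℕ) + 1)) ?_ ?_ ?_
    · intro j hj
      rw [hmemN]
      refine ⟨by rw [pow_right_comm, hζq1, one_pow], ?_⟩
      exact (hcore p.1 p.2 (j : ℕ)).mp ((mem_filter.mp hj).2)
    · intro a ha b hb h
      exact Fin.ext (ζpow_inj1 (a : ℕ) (b : ℕ) a.isLt b.isLt h)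
    · intro u hu
      rw [hmemN] at hu
      have huU : u ∈ U := (hUmem u).mpr hu.1
      rw [hUim, mem_image] at huU
      obtain ⟨i, hi, rfl⟩ := huU
      rw [mem_range] at hi
      have hjlt : (if i = 0 then q else i - 1) < q + 1 := by split <;> omega
      have hj1 : ζ ^ ((if i = 0 then q else i - 1) + 1) = ζ ^ i := by
        split
        · next h0 => rw [hζq1, h0, pow_zero]
        · next h0 => congr 1; omega
      refine ⟨⟨if i = 0 then q else i - 1, hjlt⟩, ?_, hj1⟩
      rw [mem_filter]
      refine ⟨mem_univ _, ?_⟩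
      show p.1 + Algebra.trace F K (p.2 * ζ ^ ((if i = 0 then q else i - 1) + 1)) = 0
      rw [hcore p.1 p.2, hj1]
      exact hu.2
  -- weight of a codeword
  have hwt : ∀ p : F × K,
      hammingNorm (Φ p) + (Nf (algebraMap F K p.1) (μ * p.2)).card = q + 1 := by
    intro p
    rw [← hzero p]
    have hsplit := Finset.card_filter_add_card_filter_not
      (s := (univ : Finset (Fin (q + 1)))) (p := fun j => Φ p j = 0)
    have huniv : (univ : Finset (Fin (q + 1))).card = q + 1 := by simp
    have hnorm : hammingNorm (Φ p) = (univ.filter fun j => ¬ (Φ p j = 0)).card := by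
      simp [hammingNorm]
    omega
  -- injectivity of the parametrization
  have hker : ∀ p : F × K, Φ p = 0 → p = 0 := by
    intro p hp
    have hroots : ∀ i : ℕ, i < q + 1 →
        (μ * p.2) * (ζ ^ (i + 1)) ^ 2 + (algebraMap F K p.1) * ζ ^ (i + 1)
          + (μ * p.2) ^ q = 0 := by
      intro i hi
      have h0 := congrFun hp ⟨i, hi⟩
      exact (hcore p.1 p.2 i).mp (by simpa [hΦ] using h0)
    have hne01 : ζ ^ (0 + 1) ≠ ζ ^ (1 + 1) := fun h => by
      have := ζpow_inj1 0 1 (by omega) (by omega) h; omega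
    have hne02 : ζ ^ (0 + 1) ≠ ζ ^ (2 + 1) := fun h => by
      have := ζpow_inj1 0 2 (by omega) (by omega) h; omega
    have hne12 : ζ ^ (1 + 1) ≠ ζ ^ (2 + 1) := fun h => by
      have := ζpow_inj1 1 2 (by omega) (by omega) h; omega
    have hk := key3 _ _ _ _ _ hne01 hne02 hne12
      (hroots 0 (by omega)) (hroots 1 (by omega)) (hroots 2 (by omega))
    have h1 : p.1 = 0 := hAinj (by rw [hk.1, map_zero])
    have h2 : p.2 = 0 := by
      rcases mul_eq_zero.mp hk.2 with h | h
      · exact absurd h hμ0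
      · exact h
    exact Prod.ext_iff.mpr ⟨h1, h2⟩
  have hΦadd : ∀ p p' : F × K, ∀ j : Fin (q + 1),
      Φ (p.1 + p'.1, p.2 + p'.2) j = Φ p j + Φ p' j := by
    intro p p' j
    simp only [hΦ]
    rw [add_mul, map_add]
    ring
  have hΦinj : Function.Injective Φ := by
    intro p p' h
    have hz : Φ (p.1 + p'.1, p.2 + p'.2) = 0 := by
      funext j
      rw [hΦadd, h]
      exact addF _
    have h0 := hker _ hz
    have h1 : p.1 + p'.1 = 0 := congrArg Prod.fst h0
    have h2 : p.2 + p'.2 = 0 := congrArg Prod.snd h0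
    exact Prod.ext_iff.mpr ⟨addcancelF _ _ h1, addcancelK _ _ h2⟩
  -- counting codewords via parameters
  have hset : ∀ P : (Fin (q + 1) → F) → Prop,
      {w ∈ Mdual | P w}.ncard = (univ.filter fun p : F × K => P (Φ p)).card := by
    intro P
    have h1 : {w ∈ Mdual | P w} = Φ '' {p | P (Φ p)} := by
      rw [hMr]
      ext w
      constructor
      · rintro ⟨⟨p, rfl⟩, hw⟩
        exact ⟨p, hw, rfl⟩
      · rintro ⟨p, hp, rfl⟩
        exact ⟨⟨p, rfl⟩, hp⟩
    rw [h1, Set.ncard_image_of_injective _ hΦinj,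
      show {p : F × K | P (Φ p)} = ↑(univ.filter fun p => P (Φ p)) by ext p; simp,
      Set.ncard_coe_finset]
  have hMcard : Mdual.ncard = q ^ 3 := by
    rw [hMr, ← Set.image_univ, Set.ncard_image_of_injective _ hΦinj, Set.ncard_univ,
      Nat.card_eq_fintype_card, Fintype.card_prod, hcF, hcK]
    ring
  have htrans : ∀ n : ℕ,
      (univ.filter fun p : F × K => (Nf (algebraMap F K p.1) (μ * p.2)).card = n).card
      = (univ.filter fun z : K × K => z.1 ^ q = z.1 ∧ (Nf z.1 z.2).card = n).card := by
    intro n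
    refine Finset.card_bij (fun (p : F × K) _ => ((algebraMap F K p.1), μ * p.2)) ?_ ?_ ?_
    · intro p hp
      rw [mem_filter] at hp ⊢
      exact ⟨mem_univ _, AqK p.1, hp.2⟩
    · intro p hp p' hp' h
      rw [Prod.ext_iff] at h
      exact Prod.ext_iff.mpr ⟨hAinj h.1, mul_left_cancel₀ hμ0 h.2⟩
    · intro z hz
      rw [mem_filter] at hz
      obtain ⟨-, hz1, hzN⟩ := hz
      obtain ⟨a, ha⟩ := (memF' z.1).mp hz1
      refine ⟨(a, μ⁻¹ * z.2), ?_, ?_⟩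
      · rw [mem_filter]
        refine ⟨mem_univ _, ?_⟩
        rw [ha, mul_inv_cancel_left₀ hμ0]
        exact hzN
      · exact Prod.ext_iff.mpr ⟨ha, mul_inv_cancel_left₀ hμ0 z.2⟩
  -- classification of parameter pairs by number of roots
  set DomF : ℕ → Finset (K × K) := fun n =>
    univ.filter fun z : K × K => z.1 ^ q = z.1 ∧ (Nf z.1 z.2).card = n with hDomF
  have hmemD : ∀ (n : ℕ) (z : K × K),
      z ∈ DomF n ↔ (z.1 ^ q = z.1 ∧ (Nf z.1 z.2).card = n) := by
    intro n z; simp [hDomF]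
  have hNcases : ∀ z : K × K, (Nf z.1 z.2).card = q + 1 ∨ (Nf z.1 z.2).card = 0 ∨
      (Nf z.1 z.2).card = 1 ∨ (Nf z.1 z.2).card = 2 := by
    intro z
    by_cases h1 : z.1 = 0 <;> by_cases h2 : z.2 = 0
    · left; rw [h1, h2, C0, hUcard]
    · right; right; left; rw [h1]; exact C2 _ h2
    · right; left; rw [h2, C1 _ h1, Finset.card_empty]
    · rcases C3 _ _ h1 h2 with h | h
      · right; left; exact h
      · right; right; right; exact h
  have hDq1 : DomF (q + 1) = {((0 : K), (0 : K))} := by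
    ext z
    rw [hmemD, Finset.mem_singleton]
    constructor
    · rintro ⟨hz1, hzN⟩
      by_contra hne
      have hne' : ¬ (z.1 = 0 ∧ z.2 = 0) := by
        rintro ⟨ha, hb⟩; exact hne (Prod.ext_iff.mpr ⟨ha, hb⟩)
      have := Nle2 _ _ hne'
      omega
    · rintro rfl
      refine ⟨by rw [zero_pow (show q ≠ 0 by omega)], ?_⟩
      show (Nf 0 0).card = q + 1
      rw [C0, hUcard]
  have hDq1card : (DomF (q + 1)).card = 1 := by rw [hDq1]; rfl
  have hD1 : DomF 1 = univ.filter fun z : K × K => z.1 = 0 ∧ z.2 ≠ 0 := by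
    ext z
    rw [hmemD, mem_filter]
    constructor
    · rintro ⟨hz1, hzN⟩
      by_cases h1 : z.1 = 0 <;> by_cases h2 : z.2 = 0
      · exfalso; rw [h1, h2, C0, hUcard] at hzN; omega
      · exact ⟨mem_univ _, h1, h2⟩
      · exfalso; rw [h2, C1 _ h1, Finset.card_empty] at hzN; omega
      · exfalso; rcases C3 _ _ h1 h2 with h | h <;> omega
    · rintro ⟨-, h1, h2⟩
      refine ⟨by rw [h1, zero_pow (show q ≠ 0 by omega)], ?_⟩
      rw [h1]; exact C2 _ h2
  have hD1card : (DomF 1).card = q ^ 2 - 1 := by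
    rw [hD1]
    have hbij : (univ.filter fun z : K × K => z.1 = 0 ∧ z.2 ≠ 0).card
        = (univ.filter fun d : K => d ≠ 0).card := by
      refine Finset.card_bij (fun (z : K × K) _ => z.2) ?_ ?_ ?_
      · intro z hz; rw [mem_filter] at hz ⊢; exact ⟨mem_univ _, hz.2.2⟩
      · intro z hz z' hz' h
        rw [mem_filter] at hz hz'
        exact Prod.ext_iff.mpr ⟨hz.2.1.trans hz'.2.1.symm, h⟩
      · intro d hd
        rw [mem_filter] at hd
        exact ⟨((0 : K), d), by rw [mem_filter]; exact ⟨mem_univ _, rfl, hd.2⟩, rfl⟩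
    rw [hbij, Finset.filter_ne', Finset.card_erase_of_mem (mem_univ 0), card_univ, hcK]
  have hDom : (univ.filter fun z : K × K => z.1 ^ q = z.1).card = q ^ 3 := by
    have hb : (univ.filter fun z : K × K => z.1 ^ q = z.1).card = Fintype.card (F × K) := by
      rw [← card_univ]
      refine (Finset.card_bij (fun (p : F × K) _ => ((algebraMap F K p.1), p.2)) ?_ ?_ ?_).symm
      · intro p hp; rw [mem_filter]; exact ⟨mem_univ _, AqK p.1⟩
      · intro p hp p' hp' h
        rw [Prod.ext_iff] at h
        exact Prod.ext_iff.mpr ⟨hAinj h.1, h.2⟩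
      · intro z hz
        rw [mem_filter] at hz
        obtain ⟨a, ha⟩ := (memF' z.1).mp hz.2
        exact ⟨(a, z.2), mem_univ _, Prod.ext_iff.mpr ⟨ha, rfl⟩⟩
    rw [hb, Fintype.card_prod, hcF, hcK]; ring
  have hfiber : (univ.filter fun z : K × K => z.1 ^ q = z.1).card
      = ∑ n ∈ ({q + 1, 0, 1, 2} : Finset ℕ), (DomF n).card := by
    rw [Finset.card_eq_sum_card_fiberwise
      (f := fun z : K × K => (Nf z.1 z.2).card)
      (t := ({q + 1, 0, 1, 2} : Finset ℕ))
      (by intro z hz; rcases hNcases z with h | h | h | h <;> simp [h])]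
    refine Finset.sum_congr rfl ?_
    intro n hn
    congr 1
    rw [Finset.filter_filter]
  have hsum : ∑ n ∈ ({q + 1, 0, 1, 2} : Finset ℕ), (DomF n).card
      = (DomF (q + 1)).card + ((DomF 0).card + ((DomF 1).card + (DomF 2).card)) := by
    rw [show ({q + 1, 0, 1, 2} : Finset ℕ) = insert (q+1) (insert 0 (insert 1 {2})) from rfl,
      Finset.sum_insert (by simp; omega), Finset.sum_insert (by simp),
      Finset.sum_insert (by simp), Finset.sum_singleton]
  -- double counting for weight q-1
  set T : Finset (K × K × K) := univ.filter fun t : K × K × K =>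
    t.1 ^ q = t.1 ∧ t.1 ≠ 0 ∧ t.2.1 ≠ 0 ∧ t.2.2 ^ (q + 1) = 1 ∧
      t.2.1 * t.2.2 ^ 2 + t.1 * t.2.2 + t.2.1 ^ q = 0 with hT
  set T' : Finset (K × K) := univ.filter fun z : K × K =>
    z.1 ^ (q + 1) = 1 ∧ z.2 ≠ 0 ∧ z.2 * z.1 + z.2 ^ q * z.1 ^ q ≠ 0 with hT'
  have hTT' : T'.card = T.card := by
    refine Finset.card_bij
      (fun (z : K × K) _ => (z.2 * z.1 + z.2 ^ q * z.1 ^ q, (z.2, z.1))) ?_ ?_ ?_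
    · intro z hz
      rw [hT', mem_filter] at hz
      obtain ⟨-, hu, hd, hC⟩ := hz
      have hut : z.1 ^ q * z.1 = 1 := hUinv _ hu
      rw [hT, mem_filter]
      refine ⟨mem_univ _, ?_, hC, hd, hu, ?_⟩
      · show (z.2 * z.1 + z.2 ^ q * z.1 ^ q) ^ q = _
        rw [frobK, mul_pow, mul_pow, xKq, xKq]
        ring
      · show z.2 * z.1 ^ 2 + (z.2 * z.1 + z.2 ^ q * z.1 ^ q) * z.1 + z.2 ^ q = 0
        linear_combination (z.2 ^ q) * hut + (z.2 * z.1 ^ 2 + z.2 ^ q) * h2K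
    · intro z hz z' hz' h
      rw [Prod.ext_iff] at h
      obtain ⟨-, h2'⟩ := h
      rw [Prod.ext_iff] at h2'
      exact Prod.ext_iff.mpr ⟨h2'.2, h2'.1⟩
    · intro t ht
      rw [hT, mem_filter] at ht
      obtain ⟨-, hCq, hC0, hD0, huU, hroot⟩ := ht
      have hut : t.2.2 ^ q * t.2.2 = 1 := hUinv _ huU
      have hCval : t.1 = t.2.1 * t.2.2 + t.2.1 ^ q * t.2.2 ^ q := by
        linear_combination (t.2.2 ^ q) * hroot - (t.1 + t.2.1 * t.2.2) * hut -
          (t.2.1 * t.2.2 + t.2.1 ^ q * t.2.2 ^ q) * h2K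
      refine ⟨(t.2.2, t.2.1), ?_, ?_⟩
      · rw [hT', mem_filter]
        exact ⟨mem_univ _, huU, hD0, by rw [← hCval]; exact hC0⟩
      · exact Prod.ext_iff.mpr ⟨hCval.symm, Prod.ext_iff.mpr ⟨rfl, rfl⟩⟩
  -- fibers of the power map
  have hfiberD : ∀ u : K, u ^ (q + 1) = 1 →
      (univ.filter fun d : K => d ≠ 0 ∧ d * u + d ^ q * u ^ q = 0).card = q - 1 := by
    intro u huU
    have hut : u ^ q * u = 1 := hUinv u huU
    have hu0 : u ≠ 0 := hUne0 u huU
    have hcond : ∀ d : K, d ≠ 0 → (d * u + d ^ q * u ^ q = 0 ↔ d ^ q = d * u ^ 2) := by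
      intro d hd
      constructor
      · intro h
        have h1 : d * u = d ^ q * u ^ q := addcancelK _ _ h
        calc d ^ q = d ^ q * (u ^ q * u) := by rw [hut, mul_one]
          _ = (d ^ q * u ^ q) * u := by ring
          _ = (d * u) * u := by rw [← h1]
          _ = d * u ^ 2 := by ring
      · intro h
        rw [h]
        linear_combination (d * u) * hut + (d * u) * h2K
    have hEcard : (univ.filter fun e : K => e ≠ 0 ∧ e ^ q = e).card = q - 1 := by
      have hE : (univ.filter fun e : K => e ≠ 0 ∧ e ^ q = e)
          = (univ.filter fun x : K => x ^ q = x).erase 0 := by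
        ext e
        rw [mem_filter, Finset.mem_erase, mem_filter]
        tauto
      rw [hE, Finset.card_erase_of_mem
          (by rw [mem_filter]; exact ⟨mem_univ _, by rw [zero_pow (show q ≠ 0 by omega)]⟩),
        hFim, Finset.card_image_of_injective _ hAinj, card_univ, hcF]
    have huUmem : u ∈ U := (hUmem u).mpr huU
    rw [hUim, mem_image] at huUmem
    obtain ⟨i, -, rfl⟩ := huUmem
    set d0 : K := (α ^ i) ^ 2 with hd0
    have hd00 : d0 ≠ 0 := pow_ne_zero _ (pow_ne_zero _ hαne)
    have hzu : (ζ ^ i) ^ 2 = d0 ^ (q - 1) := by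
      rw [hd0, hζ, ← pow_mul, ← pow_mul, ← pow_mul, ← pow_mul]
      congr 1
      ring
    have hd0q : d0 ^ q = d0 * (ζ ^ i) ^ 2 := by
      have hq' : q - 1 + 1 = q := by omega
      calc d0 ^ q = d0 ^ (q - 1) * d0 := by rw [← pow_succ, hq']
        _ = (ζ ^ i) ^ 2 * d0 := by rw [hzu]
        _ = d0 * (ζ ^ i) ^ 2 := mul_comm _ _
    have hbij : (univ.filter fun d : K => d ≠ 0 ∧ d * (ζ ^ i) + d ^ q * (ζ ^ i) ^ q = 0).card
        = (univ.filter fun e : K => e ≠ 0 ∧ e ^ q = e).card := by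
      refine (Finset.card_bij (fun e _ => d0 * e) ?_ ?_ ?_).symm
      · intro e he
        rw [mem_filter] at he
        obtain ⟨-, he0, heq⟩ := he
        rw [mem_filter]
        refine ⟨mem_univ _, mul_ne_zero hd00 he0, ?_⟩
        rw [hcond _ (mul_ne_zero hd00 he0), mul_pow, hd0q, heq]
        ring
      · intro e he e' he' h
        exact mul_left_cancel₀ hd00 h
      · intro d hd
        rw [mem_filter] at hd
        obtain ⟨-, hd0', hroot⟩ := hd
        refine ⟨d0⁻¹ * d, ?_, mul_inv_cancel_left₀ hd00 d⟩
        rw [mem_filter]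
        refine ⟨mem_univ _, mul_ne_zero (inv_ne_zero hd00) hd0', ?_⟩
        have hdq : d ^ q = d * (ζ ^ i) ^ 2 := (hcond d hd0').mp hroot
        rw [mul_pow, inv_pow, hdq, hd0q]
        field_simp
    rw [hbij, hEcard]
  -- counting T' by fibers over u
  have hT'card : T'.card = (q + 1) * (q ^ 2 - q) := by
    have hmap : ∀ z ∈ T', z.1 ∈ U := by
      intro z hz
      rw [hT', mem_filter] at hz
      exact (hUmem z.1).mpr hz.2.1
    rw [Finset.card_eq_sum_card_fiberwise hmap]
    have hfib : ∀ u ∈ U, (T'.filter fun z => z.1 = u).card = q ^ 2 - q := by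
      intro u huU'
      have huU : u ^ (q + 1) = 1 := (hUmem u).mp huU'
      have h1 : (T'.filter fun z => z.1 = u).card
          = (univ.filter fun d : K => d ≠ 0 ∧ ¬(d * u + d ^ q * u ^ q = 0)).card := by
        refine Finset.card_bij (fun (z : K × K) _ => z.2) ?_ ?_ ?_
        · intro z hz
          rw [mem_filter] at hz
          obtain ⟨hz', hzu⟩ := hz
          rw [hT', mem_filter] at hz'
          rw [mem_filter]
          rw [hzu] at hz'
          exact ⟨mem_univ _, hz'.2.2.1, hz'.2.2.2⟩
        · intro z hz z' hz' h
          rw [mem_filter] at hz hz'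
          exact Prod.ext_iff.mpr ⟨hz.2.trans hz'.2.symm, h⟩
        · intro d hd
          rw [mem_filter] at hd
          refine ⟨(u, d), ?_, rfl⟩
          rw [mem_filter, hT', mem_filter]
          exact ⟨⟨mem_univ _, huU, hd.2.1, hd.2.2⟩, rfl⟩
      have h2 := Finset.card_filter_add_card_filter_not
        (s := univ.filter fun d : K => d ≠ 0) (p := fun d => d * u + d ^ q * u ^ q = 0)
      rw [Finset.filter_filter, Finset.filter_filter] at h2
      have h5 : (univ.filter fun d : K => d ≠ 0).card = q ^ 2 - 1 := by
        rw [Finset.filter_ne', Finset.card_erase_of_mem (mem_univ 0), card_univ, hcK]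
      rw [h5, hfiberD u huU] at h2
      rw [h1]
      have hqq : q ≤ q ^ 2 := by nlinarith
      generalize hg : q ^ 2 = Q2 at h2 hqq ⊢
      omega
    rw [Finset.sum_congr rfl hfib, Finset.sum_const, hUcard, smul_eq_mul]
  -- T counted fiberwise over (C, D)
  have hTcard2 : T.card = 2 * (DomF 2).card := by
    have hmap : ∀ t ∈ T, (t.1, t.2.1) ∈
        (univ.filter fun z : K × K => z.1 ^ q = z.1 ∧ z.1 ≠ 0 ∧ z.2 ≠ 0) := by
      intro t ht
      rw [hT, mem_filter] at ht
      rw [mem_filter]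
      exact ⟨mem_univ _, ht.2.1, ht.2.2.1, ht.2.2.2.1⟩
    rw [Finset.card_eq_sum_card_fiberwise hmap]
    have hfib : ∀ z ∈ (univ.filter fun z : K × K => z.1 ^ q = z.1 ∧ z.1 ≠ 0 ∧ z.2 ≠ 0),
        (T.filter fun t => (t.1, t.2.1) = z).card = (Nf z.1 z.2).card := by
      intro z hz
      rw [mem_filter] at hz
      obtain ⟨-, hzq, hz1, hz2⟩ := hz
      refine Finset.card_bij (fun (t : K × K × K) _ => t.2.2) ?_ ?_ ?_
      · intro t ht
        rw [mem_filter, hT, mem_filter] at ht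
        obtain ⟨⟨-, -, -, -, hu1, hroot⟩, hteq⟩ := ht
        rw [hmemN]
        rw [Prod.ext_iff] at hteq
        refine ⟨hu1, ?_⟩
        rw [← hteq.1, ← hteq.2]
        exact hroot
      · intro t ht t' ht' h
        rw [mem_filter] at ht ht'
        have hte := ht.2
        have hte' := ht'.2
        rw [Prod.ext_iff] at hte hte'
        exact Prod.ext_iff.mpr ⟨hte.1.trans hte'.1.symm,
          Prod.ext_iff.mpr ⟨hte.2.trans hte'.2.symm, h⟩⟩
      · intro u hu
        rw [hmemN] at hu
        refine ⟨(z.1, z.2, u), ?_, rfl⟩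
        rw [mem_filter, hT, mem_filter]
        exact ⟨⟨mem_univ _, hzq, hz1, hz2, hu.1, hu.2⟩, Prod.ext_iff.mpr ⟨rfl, rfl⟩⟩
    rw [Finset.sum_congr rfl hfib]
    rw [← Finset.sum_filter_add_sum_filter_not
      (univ.filter fun z : K × K => z.1 ^ q = z.1 ∧ z.1 ≠ 0 ∧ z.2 ≠ 0)
      (fun z => (Nf z.1 z.2).card = 2)]
    have hA2 : ∀ z ∈ ((univ.filter fun z : K × K => z.1 ^ q = z.1 ∧ z.1 ≠ 0 ∧ z.2 ≠ 0).filter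
        fun z => (Nf z.1 z.2).card = 2), (Nf z.1 z.2).card = 2 :=
      fun z hz => (mem_filter.mp hz).2
    have hB2 : ∀ z ∈ ((univ.filter fun z : K × K => z.1 ^ q = z.1 ∧ z.1 ≠ 0 ∧ z.2 ≠ 0).filter
        fun z => ¬((Nf z.1 z.2).card = 2)), (Nf z.1 z.2).card = 0 := by
      intro z hz
      rw [mem_filter, mem_filter] at hz
      rcases C3 z.1 z.2 hz.1.2.2.1 hz.1.2.2.2 with h | h
      · exact h
      · exact absurd h hz.2
    rw [Finset.sum_congr rfl hA2, Finset.sum_congr rfl hB2, Finset.sum_const, Finset.sum_const,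
      smul_eq_mul, smul_eq_mul, mul_zero, add_zero]
    have hEq2 : ((univ.filter fun z : K × K => z.1 ^ q = z.1 ∧ z.1 ≠ 0 ∧ z.2 ≠ 0).filter
        fun z => (Nf z.1 z.2).card = 2) = DomF 2 := by
      ext z
      rw [mem_filter, mem_filter, hmemD]
      constructor
      · rintro ⟨⟨-, h1, -, -⟩, h2⟩
        exact ⟨h1, h2⟩
      · rintro ⟨h1, h2⟩
        refine ⟨⟨mem_univ _, h1, ?_, ?_⟩, h2⟩
        · intro h0
          by_cases hz2 : z.2 = 0
          · rw [h0, hz2, C0, hUcard] at h2; omega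
          · rw [h0] at h2; have := C2 _ hz2; omega
        · intro h0
          by_cases hz1 : z.1 = 0
          · rw [hz1, h0, C0, hUcard] at h2; omega
          · rw [h0, C1 _ hz1, Finset.card_empty] at h2; omega
    rw [hEq2]
    ring
  -- arithmetic consequences
  have e2 : (q + 1) * (q ^ 2 - q) = q ^ 3 - q := by
    zify [show q ≤ q ^ 2 by nlinarith, show q ≤ q ^ 3 by nlinarith]
    ring
  have h2S2 : 2 * (DomF 2).card = q ^ 3 - q := by
    rw [← hTcard2, ← hTT', hT'card, e2]
  have htotal : (DomF (q + 1)).card + ((DomF 0).card + ((DomF 1).card + (DomF 2).card))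
      = q ^ 3 := by
    rw [← hsum, ← hfiber, hDom]
  have harith : (DomF 0).card = (q ^ 3 - 2 * q ^ 2 + q) / 2 ∧
      (DomF 2).card = (q ^ 3 - q) / 2 := by
    have hb1 : 2 * q ^ 2 ≤ q ^ 3 := by nlinarith
    have hb2 : q ≤ q ^ 2 := by nlinarith
    have hb3 : q ^ 2 ≤ q ^ 3 := by nlinarith
    generalize hg3 : q ^ 3 = Q3 at h2S2 htotal hb1 hb3 ⊢
    generalize hg2 : q ^ 2 = Q2 at hD1card hb1 hb2 hb3 ⊢
    omega
  have hsetN : ∀ k : ℕ, {w ∈ Mdual | hammingNorm w = k}.ncard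
      = (univ.filter fun p : F × K => hammingNorm (Φ p) = k).card :=
    fun k => by
      rw [hset (fun w => hammingNorm w = k)]
      congr 1
      exact Finset.filter_congr_decidable ..
  -- final assembly
  refine ⟨hMcard, ?_, ?_, ?_, ?_, ?_⟩
  · -- minimum distance
    intro w hw hw0
    rw [hMr] at hw
    obtain ⟨p, rfl⟩ := hw
    have hΦ0 : Φ (0 : F × K) = 0 := by
      funext j
      simp [hΦ]
    have hp0 : p ≠ 0 := fun h => hw0 (by rw [h, hΦ0])
    have hNle : (Nf (algebraMap F K p.1) (μ * p.2)).card ≤ 2 := by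
      apply Nle2
      rintro ⟨h1, h2⟩
      apply hp0
      have ha : p.1 = 0 := hAinj (by rw [h1, map_zero])
      have hb : p.2 = 0 := (mul_eq_zero.mp h2).resolve_left hμ0
      exact Prod.ext_iff.mpr ⟨ha, hb⟩
    have := hwt p
    omega
  · -- weight 0
    have hcongr : (univ.filter fun p : F × K => hammingNorm (Φ p) = 0)
        = (univ.filter fun p : F × K =>
            (Nf (algebraMap F K p.1) (μ * p.2)).card = (q + 1)) := by
      apply Finset.filter_congr
      intro p _
      have h1 := hwt p
      have h2 := NlecardU (algebraMap F K p.1) (μ * p.2)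
      constructor
      · intro h; omega
      · intro h; omega
    rw [hsetN 0, hcongr, htrans (q + 1)]
    show (DomF (q + 1)).card = 1
    exact hDq1card
  · -- weight (q - 1)
    have hcongr : (univ.filter fun p : F × K => hammingNorm (Φ p) = (q - 1))
        = (univ.filter fun p : F × K =>
            (Nf (algebraMap F K p.1) (μ * p.2)).card = 2) := by
      apply Finset.filter_congr
      intro p _
      have h1 := hwt p
      have h2 := NlecardU (algebraMap F K p.1) (μ * p.2)
      constructor
      · intro h; omega
      · intro h; omega
    rw [hsetN (q - 1), hcongr, htrans 2]
    show (DomF 2).card = (q ^ 3 - q) / 2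
    exact harith.2
  · -- weight q
    have hcongr : (univ.filter fun p : F × K => hammingNorm (Φ p) = q)
        = (univ.filter fun p : F × K =>
            (Nf (algebraMap F K p.1) (μ * p.2)).card = 1) := by
      apply Finset.filter_congr
      intro p _
      have h1 := hwt p
      have h2 := NlecardU (algebraMap F K p.1) (μ * p.2)
      constructor
      · intro h; omega
      · intro h; omega
    rw [hsetN q, hcongr, htrans 1]
    show (DomF 1).card = q ^ 2 - 1
    exact hD1card
  · -- weight (q + 1)
    have hcongr : (univ.filter fun p : F × K => hammingNorm (Φ p) = (q + 1))
        = (univ.filter fun p : F × K =>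
            (Nf (algebraMap F K p.1) (μ * p.2)).card = 0) := by
      apply Finset.filter_congr
      intro p _
      have h1 := hwt p
      have h2 := NlecardU (algebraMap F K p.1) (μ * p.2)
      constructor
      · intro h; omega
      · intro h; omega
    rw [hsetN (q + 1), hcongr, htrans 0]
    show (DomF 0).card = (q ^ 3 - 2 * q ^ 2 + q) / 2
    exact harith.1
end

section
/- Let C ⊆ F_q^n be a linear code whose dual C^⊥ has minimum Hamming weight at least 3. If C^⊥ is completely regular with intersection array {b_0,…,b_{ρ−1}; c_1,…,c_ρ}, then the dual φ(C)^⊥ ⊆ F_p^{n₀n} of the concatenated image φ(C) is also completely regular with the same intersection array {b_0,…,b_{ρ−1}; c_1,…,c_ρ}. -/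
/-!
Let `ψ : F_p^{n × n₀} → F_q^n` collapse each block of `n₀` coordinates `(y_l)` to
`∑ l, y_l ξ^(l+1)`. Nondegeneracy of the trace form gives `φ(C)^⊥ = ψ⁻¹(C^⊥)`.
Since `n₀ ≡ k [MOD p - 1]`, `n₀` is prime to `p - 1`, so every nonzero element of `F_q` is
uniquely `c ξ^(l+1)` with `c ∈ F_p^*`, `l < n₀`. Hence `ψ` maps the words of weight one
bijectively onto the words of weight one, never increases weight, and every word has a lift of
the same weight. Pulling a code back along such a map preserves the distance to the code and the
number of neighbours at each distance, so the intersection array is unchanged.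
-/

open Finset

/-- The dual of a code (as a set of words) with respect to the standard inner product. -/
def dualSet {F : Type*} [CommRing F] {ι : Type*} [Fintype ι] (C : Set (ι → F)) :
    Set (ι → F) :=
  {y | ∀ x ∈ C, ∑ i, x i * y i = 0}

/-- Hamming distance from a word to a code. -/
noncomputable def distToCode {F ι : Type*} [Fintype ι] [DecidableEq F]
    (C : Set (ι → F)) (x : ι → F) : ℕ :=
  sInf {d | ∃ c ∈ C, hammingDist x c = d}

/-- A code is completely regular with covering radius `ρ` and intersection array
`{b 0, …, b (ρ-1); c 1, …, c ρ}`. -/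
def IsCompletelyRegular {F ι : Type*} [Fintype ι] [DecidableEq F]
    (C : Set (ι → F)) (ρ : ℕ) (b c : ℕ → ℕ) : Prop :=
  (∀ x, distToCode C x ≤ ρ) ∧ (∃ x, distToCode C x = ρ) ∧
    ∀ i ≤ ρ, ∀ x, distToCode C x = i →
      (i < ρ → {y | hammingDist x y = 1 ∧ distToCode C y = i + 1}.ncard = b i) ∧
      (1 ≤ i → {y | hammingDist x y = 1 ∧ distToCode C y = i - 1}.ncard = c i)

section DistToCode

variable {ι F : Type*} [Fintype ι] [DecidableEq F] {C : Set (ι → F)} {x c : ι → F}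

theorem hammingDist_eq_hammingNorm_sub {A : Type*} [AddCommGroup A] [DecidableEq A]
    (x y : ι → A) : hammingDist x y = hammingNorm (x - y) := by
  rw [hammingDist_comm, hammingDist_eq_hammingNorm]
  exact congrArg hammingNorm (neg_add_eq_sub y x)

theorem distToCode_le (hc : c ∈ C) : distToCode C x ≤ hammingDist x c :=
  Nat.sInf_le ⟨c, hc, rfl⟩

theorem exists_hammingDist_eq_distToCode (hC : C.Nonempty) (x : ι → F) :
    ∃ c ∈ C, hammingDist x c = distToCode C x :=
  Nat.sInf_mem (hC.image (hammingDist x))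

theorem distToCode_empty (x : ι → F) : distToCode (∅ : Set (ι → F)) x = 0 := by
  simp [distToCode]

end DistToCode

section Preimage

variable {ι κ A B : Type*} [Fintype ι] [Fintype κ] [AddCommGroup A] [AddCommGroup B]
  [DecidableEq A] [DecidableEq B] (f : (ι → A) →+ (κ → B))

theorem distToCode_preimage (hle : ∀ e, hammingNorm (f e) ≤ hammingNorm e)
    (hlift : ∀ v, ∃ e, f e = v ∧ hammingNorm e ≤ hammingNorm v) (D : Set (κ → B))
    (x : ι → A) : distToCode (f ⁻¹' D) x = distToCode D (f x) := by
  rcases D.eq_empty_or_nonempty with rfl | hD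
  · simp only [Set.preimage_empty, distToCode_empty]
  obtain ⟨d, hd, hxd⟩ := exists_hammingDist_eq_distToCode hD (f x)
  obtain ⟨e, hfe, hwe⟩ := hlift (f x - d)
  have hxe : x - e ∈ f ⁻¹' D := by simpa [hfe] using hd
  obtain ⟨c, hc, hxc⟩ := exists_hammingDist_eq_distToCode ⟨_, hxe⟩ x
  apply le_antisymm
  · calc distToCode (f ⁻¹' D) x ≤ hammingDist x (x - e) := distToCode_le hxe
      _ = hammingNorm e := by rw [hammingDist_eq_hammingNorm_sub, sub_sub_cancel]
      _ ≤ hammingNorm (f x - d) := hwe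
      _ = distToCode D (f x) := by rw [← hxd, hammingDist_eq_hammingNorm_sub]
  · calc distToCode D (f x) ≤ hammingDist (f x) (f c) := distToCode_le hc
      _ = hammingNorm (f (x - c)) := by rw [hammingDist_eq_hammingNorm_sub, map_sub]
      _ ≤ hammingNorm (x - c) := hle _
      _ = distToCode (f ⁻¹' D) x := by rw [← hxc, hammingDist_eq_hammingNorm_sub]

theorem bijOn_sphere_one (hone : Set.BijOn f {e | hammingNorm e = 1} {v | hammingNorm v = 1})
    (x : ι → A) : Set.BijOn f {y | hammingDist x y = 1} {z | hammingDist (f x) z = 1} := by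
  simp only [hammingDist_eq_hammingNorm_sub]
  refine ⟨fun y hy => ?_, fun y hy y' hy' h => ?_, fun z hz => ?_⟩
  · simpa [map_sub] using hone.mapsTo hy
  · simpa using hone.injOn hy hy' (by simp [map_sub, h])
  · obtain ⟨e, he, hfe⟩ := hone.surjOn hz
    exact ⟨x - e, by simpa using he, by simp [map_sub, hfe]⟩

theorem ncard_neighbours_preimage (hle : ∀ e, hammingNorm (f e) ≤ hammingNorm e)
    (hlift : ∀ v, ∃ e, f e = v ∧ hammingNorm e ≤ hammingNorm v)
    (hone : Set.BijOn f {e | hammingNorm e = 1} {v | hammingNorm v = 1})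
    (D : Set (κ → B)) (x : ι → A) (m : ℕ) :
    {y | hammingDist x y = 1 ∧ distToCode (f ⁻¹' D) y = m}.ncard =
      {z | hammingDist (f x) z = 1 ∧ distToCode D z = m}.ncard := by
  simp only [distToCode_preimage f hle hlift]
  exact ((bijOn_sphere_one f hone x).inter_mapsTo (t₂ := {z | distToCode D z = m})
    (fun _ h => h) (fun _ h => h.2)).ncard_eq

theorem IsCompletelyRegular.preimage (hle : ∀ e, hammingNorm (f e) ≤ hammingNorm e)
    (hlift : ∀ v, ∃ e, f e = v ∧ hammingNorm e ≤ hammingNorm v)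
    (hone : Set.BijOn f {e | hammingNorm e = 1} {v | hammingNorm v = 1})
    {D : Set (κ → B)} {ρ : ℕ} {b c : ℕ → ℕ} (hD : IsCompletelyRegular D ρ b c) :
    IsCompletelyRegular (f ⁻¹' D) ρ b c := by
  obtain ⟨hcov, ⟨v, hv⟩, hreg⟩ := hD
  obtain ⟨e, rfl, -⟩ := hlift v
  have hdist := distToCode_preimage f hle hlift D
  refine ⟨fun x => hdist x ▸ hcov (f x), ⟨e, hdist e ▸ hv⟩, fun i hi x hx => ?_⟩
  simp only [ncard_neighbours_preimage f hle hlift hone]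
  exact hreg i hi (f x) (hdist x ▸ hx)

end Preimage

section Hamming

variable {ι β A : Type*} [Fintype ι] [Fintype β] [Zero A] [DecidableEq A]

theorem hammingNorm_eq_sum_blocks (y : ι × β → A) :
    hammingNorm y = ∑ j, hammingNorm fun l => y (j, l) := by
  simp only [hammingNorm, card_filter]
  exact Fintype.sum_prod_type _

theorem hammingNorm_block_le (y : ι × β → A) (j : ι) :
    hammingNorm (fun l => y (j, l)) ≤ hammingNorm y := by
  rw [hammingNorm_eq_sum_blocks]
  exact single_le_sum (f := fun j => hammingNorm fun l => y (j, l))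
    (fun _ _ => Nat.zero_le _) (mem_univ j)

theorem hammingNorm_eq_one_iff [DecidableEq β] {u : β → A} :
    hammingNorm u = 1 ↔ ∃ l c, c ≠ 0 ∧ u = Pi.single l c := by
  constructor
  · intro h
    obtain ⟨l, hl⟩ := card_eq_one.1 h
    have hsupp : ∀ i, u i ≠ 0 ↔ i = l := fun i => by simpa using Finset.ext_iff.1 hl i
    refine ⟨l, u l, (hsupp l).2 rfl, funext fun i => ?_⟩
    by_cases hi : i = l
    · simp [hi]
    · simpa [Pi.single_eq_of_ne hi] using (hsupp i).not.2 hi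
  · rintro ⟨l, c, hc, rfl⟩
    simp [hammingNorm, Pi.single_apply, hc, filter_eq']

end Hamming

section BlockMap

variable {ι β A B : Type*} [AddCommGroup A] [AddCommGroup B]

def blockMap (g : (β → A) →+ B) : (ι × β → A) →+ (ι → B) where
  toFun y j := g fun l => y (j, l)
  map_zero' := funext fun _ => map_zero g
  map_add' _ _ := funext fun _ => map_add g _ _

theorem blockMap_apply (g : (β → A) →+ B) (y : ι × β → A) (j : ι) :
    blockMap g y j = g fun l => y (j, l) :=
  rfl

variable [Fintype β] [DecidableEq A]

theorem bijOn_hammingNorm_le_one_of_bijOn_single [DecidableEq β] {g : (β → A) →+ B}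
    (hg : Set.BijOn (fun x : β × A => g (Pi.single x.1 x.2)) {x | x.2 ≠ 0} {b | b ≠ 0}) :
    Set.BijOn g {u | hammingNorm u ≤ 1} Set.univ := by
  have hzero : ∀ u, hammingNorm u ≤ 1 → g u = 0 → u = 0 := by
    intro u hu hgu
    rcases Nat.le_one_iff_eq_zero_or_eq_one.1 hu with h0 | h1
    · exact hammingNorm_eq_zero.1 h0
    · obtain ⟨l, c, hc, rfl⟩ := hammingNorm_eq_one_iff.1 h1
      exact absurd hgu (hg.mapsTo (x := (l, c)) hc)
  refine ⟨fun _ _ => trivial, fun u hu u' hu' h => ?_, fun b _ => ?_⟩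
  · by_cases h0 : g u = 0
    · rw [hzero u hu h0, hzero u' hu' (h ▸ h0)]
    have h1 : hammingNorm u = 1 := by
      have : hammingNorm u ≤ 1 := hu
      have := hammingNorm_ne_zero_iff.2 fun (hu0 : u = 0) => h0 (by rw [hu0, map_zero])
      omega
    have h1' : hammingNorm u' = 1 := by
      have : hammingNorm u' ≤ 1 := hu'
      have := hammingNorm_ne_zero_iff.2 fun (hu0 : u' = 0) => h0 (by rw [h, hu0, map_zero])
      omega
    obtain ⟨l, c, hc, rfl⟩ := hammingNorm_eq_one_iff.1 h1
    obtain ⟨l', c', hc', rfl⟩ := hammingNorm_eq_one_iff.1 h1'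
    obtain ⟨rfl, rfl⟩ := Prod.ext_iff.1 (hg.injOn (x₁ := (l, c)) (x₂ := (l', c')) hc hc' h)
    rfl
  · by_cases hb : b = 0
    · exact ⟨0, by simp, by rw [hb, map_zero]⟩
    obtain ⟨⟨l, c⟩, hc, rfl⟩ := hg.surjOn hb
    exact ⟨Pi.single l c, (hammingNorm_eq_one_iff.2 ⟨l, c, hc, rfl⟩).le, rfl⟩

variable {g : (β → A) →+ B} (hg : Set.BijOn g {u | hammingNorm u ≤ 1} Set.univ)
include hg

theorem injOn_blockMap :
    Set.InjOn (blockMap g) {y : ι × β → A | ∀ j, hammingNorm (fun l => y (j, l)) ≤ 1} :=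
  fun _ hy _ hy' h => funext fun jl =>
    congrFun (hg.injOn (hy jl.1) (hy' jl.1) (congrFun h jl.1)) jl.2

theorem exists_blockMap_eq (v : ι → B) :
    ∃ y : ι × β → A, (∀ j, hammingNorm (fun l => y (j, l)) ≤ 1) ∧
      blockMap g y = v := by
  choose u hu hgu using fun j => hg.surjOn (Set.mem_univ (v j))
  exact ⟨fun jl => u jl.1 jl.2, hu, funext hgu⟩

variable [Fintype ι] [DecidableEq B]

omit hg in
theorem hammingNorm_blockMap_le (g : (β → A) →+ B) (y : ι × β → A) :
    hammingNorm (blockMap g y) ≤ hammingNorm y := by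
  rw [hammingNorm_eq_sum_blocks, hammingNorm, card_filter]
  refine sum_le_sum fun j _ => ?_
  split_ifs with h
  · exact hammingNorm_pos_iff.2 fun h0 => h (by rw [blockMap_apply, h0, map_zero])
  · exact Nat.zero_le _

theorem hammingNorm_blockMap {y : ι × β → A}
    (hy : ∀ j, hammingNorm (fun l => y (j, l)) ≤ 1) :
    hammingNorm (blockMap g y) = hammingNorm y := by
  rw [hammingNorm_eq_sum_blocks, hammingNorm, card_filter]
  refine sum_congr rfl fun j _ => ?_
  have hinj := hg.injOn (hy j) (by simp : (0 : β → A) ∈ {u | hammingNorm u ≤ 1})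
  split_ifs with h
  · have := hammingNorm_ne_zero_iff.2 fun (h0 : (fun l => y (j, l)) = 0) =>
      h (by rw [blockMap_apply, h0, map_zero])
    have := hy j
    omega
  · rw [hinj ((not_not.1 h).trans (map_zero g).symm), hammingNorm_zero]

theorem IsCompletelyRegular.preimage_blockMap {D : Set (ι → B)} {ρ : ℕ} {b c : ℕ → ℕ}
    (hD : IsCompletelyRegular D ρ b c) : IsCompletelyRegular (blockMap g ⁻¹' D) ρ b c := by
  have hsmall : ∀ y : ι × β → A, hammingNorm y = 1 →
      ∀ j, hammingNorm (fun l => y (j, l)) ≤ 1 :=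
    fun y hy j => hy ▸ hammingNorm_block_le y j
  refine hD.preimage _ (hammingNorm_blockMap_le g) (fun v => ?_)
    ⟨fun y hy => ?_, ?_, fun v hv => ?_⟩
  · obtain ⟨y, hy, rfl⟩ := exists_blockMap_eq hg v
    exact ⟨y, rfl, (hammingNorm_blockMap hg hy).ge⟩
  · exact (hammingNorm_blockMap hg (hsmall y hy)).trans hy
  · exact (injOn_blockMap hg).mono hsmall
  · obtain ⟨y, hy, rfl⟩ := exists_blockMap_eq hg v
    exact ⟨y, (hammingNorm_blockMap hg hy).symm.trans hv, rfl⟩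

end BlockMap

theorem geomSum_modEq_sub_one {p : ℕ} (hp : 1 ≤ p) (k : ℕ) :
    ∑ i ∈ range k, p ^ i ≡ k [MOD p - 1] := by
  have hp1 : p ≡ 1 [MOD p - 1] := by
    conv_lhs => rw [← Nat.sub_add_cancel hp]
    exact Nat.add_modEq_left
  calc ∑ i ∈ range k, p ^ i ≡ ∑ i ∈ range k, 1 ^ i [MOD p - 1] :=
        Nat.ModEq.sum fun i _ => hp1.pow i
    _ = k := by simp

theorem coprime_geomSum_sub_one {p k : ℕ} (hp : 1 ≤ p) (hk : k.Coprime (p - 1)) :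
    (∑ i ∈ range k, p ^ i).Coprime (p - 1) :=
  (geomSum_modEq_sub_one hp k).gcd_eq.trans hk

section FiniteField

variable {K L : Type*} [Field K] [Fintype K] [Field L] [Algebra K L] {n₀ : ℕ} {ξ : L}

theorem injOn_smul_pow (hξ : orderOf ξ = n₀) (hcop : n₀.Coprime (Fintype.card K - 1)) :
    Set.InjOn (fun x : Fin n₀ × K => x.2 • ξ ^ ((x.1 : ℕ) + 1)) {x | x.2 ≠ 0} := by
  rintro ⟨a, c⟩ (hc : c ≠ 0) ⟨b, c'⟩ (hc' : c' ≠ 0)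
    (h : c • ξ ^ ((a : ℕ) + 1) = c' • ξ ^ ((b : ℕ) + 1))
  -- `ξ ^ n₀ = 1`, and `x ↦ x ^ n₀` is injective on `Kˣ` because `n₀` is prime to `|Kˣ|`
  have hξn : ∀ m : ℕ, (ξ ^ m) ^ n₀ = 1 := fun m => by
    rw [← pow_mul, mul_comm, pow_mul, ← hξ, pow_orderOf_eq_one, one_pow]
  have hpow : c ^ n₀ = c' ^ n₀ := by
    have := congrArg (· ^ n₀) h
    rw [smul_pow, smul_pow, hξn, hξn, Algebra.smul_def, Algebra.smul_def, mul_one, mul_one]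
      at this
    exact (algebraMap K L).injective this
  have hcc : c = c' := by
    have hd : (c / c') ^ n₀.gcd (Fintype.card K - 1) = 1 := pow_gcd_eq_one.2
      ⟨by rw [div_pow, hpow, div_self (pow_ne_zero _ hc')],
        FiniteField.pow_card_sub_one_eq_one _ (div_ne_zero hc hc')⟩
    rwa [hcop, pow_one, div_eq_one_iff_eq hc'] at hd
  subst hcc
  have hab : ξ ^ ((a : ℕ) + 1) = ξ ^ ((b : ℕ) + 1) := smul_right_injective L hc h
  rw [(orderOf_pos_iff.1 (hξ ▸ a.pos)).pow_eq_pow_iff_modEq, hξ] at hab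
  exact Prod.ext (Fin.ext ((Nat.ModEq.add_right_cancel' 1 hab).eq_of_lt_of_lt a.2 b.2)) rfl

theorem bijOn_smul_pow [Fintype L] (hξ : orderOf ξ = n₀)
    (hcop : n₀.Coprime (Fintype.card K - 1))
    (hcard : n₀ * (Fintype.card K - 1) = Fintype.card L - 1) :
    Set.BijOn (fun x : Fin n₀ × K => x.2 • ξ ^ ((x.1 : ℕ) + 1))
      {x | x.2 ≠ 0} {a | a ≠ 0} := by
  classical
  have hmaps : Set.MapsTo (fun x : Fin n₀ × K => x.2 • ξ ^ ((x.1 : ℕ) + 1))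
      {x | x.2 ≠ 0} {a | a ≠ 0} := by
    rintro ⟨l, c⟩ (hc : c ≠ 0)
    have hξ0 : ξ ≠ 0 := (orderOf_pos_iff.1 (hξ ▸ l.pos)).isUnit.ne_zero
    exact smul_ne_zero hc (pow_ne_zero _ hξ0)
  have hinj := injOn_smul_pow hξ hcop
  refine ⟨hmaps, hinj, ?_⟩
  have hsurj := Finset.surjOn_of_injOn_of_card_le _
    (s := univ.filter fun x : Fin n₀ × K => x.2 ≠ 0) (t := univ.filter fun a : L => a ≠ 0)
    (by simpa using hmaps) (by simpa using hinj) ?_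
  · simpa using hsurj
  · rw [filter_ne', card_erase_of_mem (mem_univ _), card_univ, ← hcard, ← univ_product_univ,
      filter_product_right (fun c : K => c ≠ 0), card_product, filter_ne',
      card_erase_of_mem (mem_univ _), card_univ, card_univ, Fintype.card_fin]

theorem bijOn_linearCombination_pow [DecidableEq K] [Fintype L] (hξ : orderOf ξ = n₀)
    (hcop : n₀.Coprime (Fintype.card K - 1))
    (hcard : n₀ * (Fintype.card K - 1) = Fintype.card L - 1) :
    Set.BijOn (Fintype.linearCombination K fun l : Fin n₀ => ξ ^ ((l : ℕ) + 1)).toAddMonoidHom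
      {u | hammingNorm u ≤ 1} Set.univ :=
  bijOn_hammingNorm_le_one_of_bijOn_single <| (bijOn_smul_pow hξ hcop hcard).congr fun x _ => by
    simp

end FiniteField

theorem dualSet_image_trace {K L ι β : Type*} [Field K] [Field L] [Algebra K L]
    [FiniteDimensional K L] [Algebra.IsSeparable K L] [Fintype ι] [Fintype β]
    (w : β → L) (C : Submodule L (ι → L)) (Φ : (ι → L) → (ι × β → K))
    (hΦ : ∀ v jl, Φ v jl = Algebra.trace K L (v jl.1 * w jl.2)) :
    dualSet (Φ '' (C : Set (ι → L))) =
      blockMap (Fintype.linearCombination K w).toAddMonoidHom ⁻¹'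
        dualSet (C : Set (ι → L)) := by
  set ψ := blockMap (ι := ι) (Fintype.linearCombination K w).toAddMonoidHom
  have hpair : ∀ v y, ∑ jl, Φ v jl * y jl = Algebra.trace K L (∑ j, v j * ψ y j) := by
    intro v y
    simp only [Fintype.sum_prod_type, map_sum, hΦ, ψ, blockMap_apply,
      LinearMap.toAddMonoidHom_coe, Fintype.linearCombination_apply, mul_sum, mul_smul_comm,
      map_smul, smul_eq_mul, mul_comm]
  ext y
  refine ⟨fun hy v hv => ?_, fun hy => ?_⟩
  · refine (traceForm_nondegenerate K L).1 _ fun a => ?_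
    have := hy _ ⟨a • v, C.smul_mem a hv, rfl⟩
    rw [hpair] at this
    simpa [Algebra.traceForm_apply, mul_sum, mul_assoc, mul_comm] using this
  · rintro _ ⟨v, hv, rfl⟩
    rw [hpair, hy v hv, map_zero]

theorem stmt_4_general (p k n₀ : ℕ) (hcop : Nat.Coprime k (p - 1))
    (Fp Fq : Type) [Field Fp] [Field Fq] [Fintype Fp] [Fintype Fq]
    [DecidableEq Fp] [DecidableEq Fq] [Algebra Fp Fq]
    (hcp : Fintype.card Fp = p) (hcq : Fintype.card Fq = p ^ k)
    (hn₀ : n₀ = (p ^ k - 1) / (p - 1))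
    (ξ : Fq) (hξ : orderOf ξ = n₀)
    (n : ℕ)
    (Φ : (Fin n → Fq) → (Fin n × Fin n₀ → Fp))
    (hΦ : ∀ (v : Fin n → Fq) (jl : Fin n × Fin n₀),
      Φ v jl = Algebra.trace Fp Fq (v jl.1 * ξ ^ ((jl.2 : ℕ) + 1)))
    (C : Submodule Fq (Fin n → Fq))
    (ρ : ℕ) (b c : ℕ → ℕ)
    (hCR : IsCompletelyRegular (dualSet (C : Set (Fin n → Fq))) ρ b c) :
    IsCompletelyRegular (dualSet (Φ '' (C : Set (Fin n → Fq)))) ρ b c := by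
  have hp : 2 ≤ p := hcp ▸ Fintype.one_lt_card
  have hcard : n₀ * (Fintype.card Fp - 1) = Fintype.card Fq - 1 := by
    rw [hcp, hcq, hn₀]
    exact Nat.div_mul_cancel (by simpa using Nat.sub_dvd_pow_sub_pow p 1 k)
  have hcop₀ : n₀.Coprime (Fintype.card Fp - 1) := by
    rw [hcp, hn₀, ← Nat.geomSum_eq hp]
    exact coprime_geomSum_sub_one (by omega) hcop
  have : FiniteDimensional Fp Fq := Module.Finite.of_finite
  rw [dualSet_image_trace (fun l : Fin n₀ => ξ ^ ((l : ℕ) + 1)) C Φ hΦ]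
  exact hCR.preimage_blockMap (bijOn_linearCombination_pow (K := Fp) hξ hcop₀ hcard)

/-- Let `C ⊆ F_q^n` be a linear code whose dual `C^⊥` has minimum Hamming
weight at least `3`.  If `C^⊥` is completely regular with intersection array
`{b_0,…,b_{ρ−1}; c_1,…,c_ρ}`, then the dual `φ(C)^⊥ ⊆ F_p^{n₀·n}` of the concatenated
image `φ(C)` is also completely regular with the same intersection array. -/
theorem stmt_4 (p k n₀ : ℕ) (hk : 1 ≤ k) (hcop : Nat.Coprime k (p - 1))
    (Fp Fq : Type) [Field Fp] [Field Fq] [Fintype Fp] [Fintype Fq]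
    [DecidableEq Fp] [DecidableEq Fq] [Algebra Fp Fq]
    (hcp : Fintype.card Fp = p) (hcq : Fintype.card Fq = p ^ k)
    (hn₀ : n₀ = (p ^ k - 1) / (p - 1))
    (ξ : Fq) (hξ : orderOf ξ = n₀)
    (n : ℕ) (hn : 1 ≤ n)
    (Φ : (Fin n → Fq) → (Fin n × Fin n₀ → Fp))
    (hΦ : ∀ (v : Fin n → Fq) (jl : Fin n × Fin n₀),
      Φ v jl = Algebra.trace Fp Fq (v jl.1 * ξ ^ ((jl.2 : ℕ) + 1)))
    (C : Submodule Fq (Fin n → Fq))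
    (hdist : ∀ w ∈ dualSet (C : Set (Fin n → Fq)), w ≠ 0 → 3 ≤ hammingNorm w)
    (ρ : ℕ) (b c : ℕ → ℕ)
    (hCR : IsCompletelyRegular (dualSet (C : Set (Fin n → Fq))) ρ b c) :
    IsCompletelyRegular (dualSet (Φ '' (C : Set (Fin n → Fq)))) ρ b c :=
  stmt_4_general p k n₀ hcop Fp Fq hcp hcq hn₀ ξ hξ n Φ hΦ C ρ b c hCR
end

section
/- Let C ⊆ F_q^n be a linear code whose dual C^⊥ has minimum Hamming weight at least 4. Then the three groups AutL_p(C), AutM(φ(C)) and AutM(φ(C)^⊥) are pairwise isomorphic, where φ(C) ⊆ F_p^{n₀n} is the concatenated code and φ(C)^⊥ its dual. -/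
/-!
On one block, `φ` records the values of `z ∈ F_q` under the `F_p`-linear functionals
`Tr(· ξ^l)`. Because `gcd(n₀, p - 1) = 1`, the powers `ξ^1, …, ξ^{n₀}` represent every point of
the projective space of `F_q` over `F_p` exactly once, so by trace duality these functionals are
all nonzero functionals up to scalars. An `F_p`-linear bijection of a coordinate permutes them up
to scalars, which turns an element of `AutL_p(C)` into a monomial automorphism of `φ(C)`.
Conversely, a relation `ξ^l + ξ^{l'} = a ξ^{l''}` gives a dual word of `φ(C)` of weight three
inside one block; as `C^⊥` has no nonzero word of weight at most three, every block of such a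
word is itself a relation among the `ξ^l`, hence has weight zero or at least three. So monomial
automorphisms of `φ(C)` preserve blocks, and within each block they act through an
`F_p`-linear bijection of `F_q`. Finally `M ↦ (M⁻¹)ᵀ` identifies `AutM(W)` with `AutM(W^⊥)` for
every linear code `W`.
-/

open Finset

/-- Monomial automorphisms of a code. -/
def autMSet {F : Type*} [MonoidWithZero F] {ι : Type*} (C : Set (ι → F)) :
    Set (Equiv.Perm (ι → F)) :=
  {e | (∃ (π : Equiv.Perm ι) (c : ι → F), (∀ i, c i ≠ 0) ∧
        ∀ v i, e v i = c i * v (π⁻¹ i)) ∧ ⇑e '' C = C}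

/-- `Fp`-linear automorphisms of a code over a field `Fq` which is an `Fp`-algebra. -/
def autLSet (Fp : Type*) {Fq : Type*} [Field Fp] [Field Fq] [Algebra Fp Fq] {ι : Type*}
    (C : Set (ι → Fq)) : Set (Equiv.Perm (ι → Fq)) :=
  {e | (∃ (π : Equiv.Perm ι) (σ : ι → Equiv.Perm Fq),
        (∀ i x y, σ i (x + y) = σ i x + σ i y) ∧
        (∀ i (b : Fp) (x : Fq), σ i (algebraMap Fp Fq b * x) = algebraMap Fp Fq b * σ i x) ∧
        ∀ v i, e v i = σ i (v (π⁻¹ i))) ∧ ⇑e '' C = C}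

/-- Two subsets of (possibly different) groups are isomorphic as groups:
there is a bijection between them preserving multiplication. -/
def MulBijOn {X Y : Type*} [Mul X] [Mul Y] (A : Set X) (B : Set Y) : Prop :=
  ∃ f : X → Y, Set.BijOn f A B ∧ ∀ a ∈ A, ∀ b ∈ A, f (a * b) = f a * f b

theorem MulBijOn.trans {X Y Z : Type*} [Mul X] [Mul Y] [Mul Z] {A : Set X} {B : Set Y}
    {D : Set Z} (h₁ : MulBijOn A B) (h₂ : MulBijOn B D) : MulBijOn A D := by
  obtain ⟨f, hf, hfm⟩ := h₁
  obtain ⟨g, hg, hgm⟩ := h₂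
  refine ⟨g ∘ f, hg.comp hf, fun a ha b hb => ?_⟩
  simp only [Function.comp_apply, hfm a ha b hb, hgm _ (hf.mapsTo ha) _ (hf.mapsTo hb)]

theorem MulBijOn.of_rel {X Y : Type*} [Mul X] [Mul Y] [Nonempty Y] {A : Set X} {B : Set Y}
    (R : X → Y → Prop) (hA : ∀ a ∈ A, ∃ b ∈ B, R a b) (hB : ∀ b ∈ B, ∃ a ∈ A, R a b)
    (hR : ∀ a b b', R a b → R a b' → b = b') (hR' : ∀ a a' b, R a b → R a' b → a = a')
    (hmul : ∀ a a' b b', R a b → R a' b' → R (a * a') (b * b')) : MulBijOn A B := by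
  classical
  let f : X → Y := fun a => if h : ∃ b, R a b then h.choose else Classical.arbitrary Y
  have hf : ∀ a b, R a b → f a = b := fun a b hab => by
    have h : ∃ b, R a b := ⟨b, hab⟩
    simp only [f, dif_pos h]
    exact hR a _ _ h.choose_spec hab
  refine ⟨f, ⟨fun a ha => ?_, fun a ha a' ha' he => ?_, fun b hb => ?_⟩, fun a ha a' ha' => ?_⟩
  · obtain ⟨b, hb, hab⟩ := hA a ha
    rwa [hf a b hab]
  · obtain ⟨b, -, hab⟩ := hA a ha
    obtain ⟨b', -, hab'⟩ := hA a' ha'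
    rw [hf a b hab, hf a' b' hab'] at he
    exact hR' a a' b hab (he ▸ hab')
  · obtain ⟨a, ha, hab⟩ := hB b hb
    exact ⟨a, ha, hf a b hab⟩
  · obtain ⟨b, -, hab⟩ := hA a ha
    obtain ⟨b', -, hab'⟩ := hA a' ha'
    rw [hf a b hab, hf a' b' hab']
    exact hf _ _ (hmul a a' b b' hab hab')

section Monomial

variable {ι F : Type*}

def IsMonomial [MonoidWithZero F] (e : Equiv.Perm (ι → F)) : Prop :=
  ∃ (π : Equiv.Perm ι) (c : ι → F), (∀ i, c i ≠ 0) ∧ ∀ v i, e v i = c i * v (π⁻¹ i)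

theorem mem_autMSet_iff [MonoidWithZero F] {C : Set (ι → F)} {e : Equiv.Perm (ι → F)} :
    e ∈ autMSet C ↔ IsMonomial e ∧ ⇑e '' C = C :=
  Iff.rfl

variable [GroupWithZero F]

def monomialPerm (π : Equiv.Perm ι) (c : ι → F) (hc : ∀ i, c i ≠ 0) : Equiv.Perm (ι → F) where
  toFun v i := c i * v (π⁻¹ i)
  invFun v i := (c (π i))⁻¹ * v (π i)
  left_inv v := funext fun i => by simp [hc]
  right_inv v := funext fun i => by simp [hc]

theorem monomialPerm_apply (π : Equiv.Perm ι) (c : ι → F) (hc : ∀ i, c i ≠ 0) (v : ι → F) (i : ι) :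
    monomialPerm π c hc v i = c i * v (π⁻¹ i) :=
  rfl

theorem isMonomial_monomialPerm (π : Equiv.Perm ι) (c : ι → F) (hc : ∀ i, c i ≠ 0) :
    IsMonomial (monomialPerm π c hc) :=
  ⟨π, c, hc, fun _ _ => rfl⟩

theorem IsMonomial.mul {e₁ e₂ : Equiv.Perm (ι → F)} (h₁ : IsMonomial e₁) (h₂ : IsMonomial e₂) :
    IsMonomial (e₁ * e₂) := by
  obtain ⟨π₁, c₁, hc₁, he₁⟩ := h₁
  obtain ⟨π₂, c₂, hc₂, he₂⟩ := h₂
  refine ⟨π₁ * π₂, fun i => c₁ i * c₂ (π₁⁻¹ i), fun i => mul_ne_zero (hc₁ i) (hc₂ _),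
    fun v i => ?_⟩
  simp only [Equiv.Perm.coe_mul, Function.comp_apply, he₁, he₂, mul_assoc, mul_inv_rev]

theorem IsMonomial.hammingNorm_apply [Fintype ι] [DecidableEq F] {e : Equiv.Perm (ι → F)}
    (he : IsMonomial e) (v : ι → F) : hammingNorm (e v) = hammingNorm v := by
  obtain ⟨π, c, hc, he⟩ := he
  rw [show e v = fun i => c i * v (π⁻¹ i) from funext (he v),
    hammingNorm_comp (fun i x => c i * x) (x := fun i => v (π⁻¹ i))
      (fun i => mul_right_injective₀ (hc i)) (fun i => mul_zero _)]
  exact Finset.card_equiv π⁻¹ (by simp)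

end Monomial

section Dual

variable {ι F : Type*} [Fintype ι] [Field F]

theorem dualSet_dualSet (W : Submodule F (ι → F)) :
    dualSet (dualSet (W : Set (ι → F))) = W := by
  have hdual : ∀ W : Submodule F (ι → F),
      dualSet (W : Set (ι → F)) = LinearMap.BilinForm.orthogonal (dotProductBilin F F) W :=
    fun _ => rfl
  have hnd : (dotProductBilin F F : LinearMap.BilinForm F (ι → F)).Nondegenerate :=
    ⟨fun x hx => dotProduct_eq_zero x hx,
      fun y hy => dotProduct_eq_zero y fun x => dotProduct_comm y x ▸ hy x⟩
  rw [hdual, hdual, LinearMap.BilinForm.orthogonal_orthogonal hnd]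
  intro x y hxy
  simpa [dotProduct_comm] using hxy

theorem monomialPerm_dotProduct_monomialPerm_inv (π : Equiv.Perm ι) (c : ι → F) (hc : ∀ i, c i ≠ 0)
    (x y : ι → F) :
    monomialPerm π c hc x ⬝ᵥ monomialPerm π (fun i => (c i)⁻¹) (fun i => inv_ne_zero (hc i)) y
      = x ⬝ᵥ y := by
  simp only [dotProduct, monomialPerm_apply]
  rw [← Equiv.sum_comp π]
  exact Finset.sum_congr rfl fun i _ => by field_simp [hc (π i)]; simp

theorem IsMonomial.exists_dotProduct_eq {M : Equiv.Perm (ι → F)} (hM : IsMonomial M) :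
    ∃ N, IsMonomial N ∧ ∀ x y, M x ⬝ᵥ N y = x ⬝ᵥ y := by
  obtain ⟨π, c, hc, hM⟩ := hM
  obtain rfl : M = monomialPerm π c hc := Equiv.ext fun v => funext (hM v)
  exact ⟨_, isMonomial_monomialPerm _ _ _, monomialPerm_dotProduct_monomialPerm_inv π c hc⟩

theorem image_dualSet_of_dotProduct_eq {M N : Equiv.Perm (ι → F)}
    (h : ∀ x y, M x ⬝ᵥ N y = x ⬝ᵥ y) {V : Set (ι → F)} (hV : ⇑M '' V = V) :
    ⇑N '' dualSet V = dualSet V := by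
  refine (Set.image_subset_iff.mpr fun y hy v hv => ?_).antisymm fun y hy =>
    ⟨N.symm y, fun v hv => ?_, N.apply_symm_apply y⟩
  · rw [← hV] at hv
    obtain ⟨u, hu, rfl⟩ := hv
    exact (h u y).trans (hy u hu)
  · change v ⬝ᵥ N.symm y = 0
    rw [← h, N.apply_symm_apply]
    exact hy (M v) (hV ▸ Set.mem_image_of_mem M hv)

theorem mulBijOn_autMSet_dualSet (W : Submodule F (ι → F)) :
    MulBijOn (autMSet (W : Set (ι → F))) (autMSet (dualSet (W : Set (ι → F)))) := by
  refine MulBijOn.of_rel (fun M N => ∀ x y, M x ⬝ᵥ N y = x ⬝ᵥ y) ?_ ?_ ?_ ?_ ?_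
  · intro M hM
    obtain ⟨hM, hMW⟩ := mem_autMSet_iff.mp hM
    obtain ⟨N, hN, hMN⟩ := hM.exists_dotProduct_eq
    exact ⟨N, ⟨hN, image_dualSet_of_dotProduct_eq hMN hMW⟩, hMN⟩
  · intro N hN
    obtain ⟨hN, hNW⟩ := mem_autMSet_iff.mp hN
    obtain ⟨M, hM, hNM⟩ := hN.exists_dotProduct_eq
    have hMN : ∀ x y, M x ⬝ᵥ N y = x ⬝ᵥ y := fun x y => by
      rw [dotProduct_comm, hNM, dotProduct_comm]
    refine ⟨M, ⟨hM, ?_⟩, hMN⟩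
    simpa [dualSet_dualSet] using image_dualSet_of_dotProduct_eq hNM hNW
  · intro M N N' h h'
    refine Equiv.ext fun y => dotProduct_eq _ _ fun u => ?_
    have := (h (M.symm u) y).trans (h' (M.symm u) y).symm
    rwa [M.apply_symm_apply, dotProduct_comm, dotProduct_comm u] at this
  · intro M M' N h h'
    refine Equiv.ext fun x => dotProduct_eq _ _ fun u => ?_
    rw [← N.apply_symm_apply u, h, h']
  · intro M M' N N' h h' x y
    exact (h (M' x) (N' y)).trans (h' x y)

end Dual

section ProjEnumeration

variable {K V ι₀ : Type*} [Field K] [AddCommGroup V] [Module K V] {u : ι₀ → V}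

/-- The powers `ξ ^ 1, …, ξ ^ n₀` of the theorem enumerate `ℙ(F_q)` over `F_p` in this sense
(`isProjEnumeration_pow`). -/
structure IsProjEnumeration (K : Type*) {V ι₀ : Type*} [Field K] [AddCommGroup V] [Module K V]
    (u : ι₀ → V) : Prop where
  ne_zero : ∀ l, u l ≠ 0
  bijective : Function.Bijective fun l => Projectivization.mk K (u l) (ne_zero l)

/-- Under the trace, `blockSum u` is adjoint to `concatMap K u` (`concatMap_dotProduct`). -/
def blockSum {ι : Type*} [Fintype ι₀] (u : ι₀ → V) (y : ι × ι₀ → K) : ι → V :=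
  fun j => ∑ m, y (j, m) • u m

namespace IsProjEnumeration

variable (hu : IsProjEnumeration K u)
include hu

theorem exists_smul_eq {v : V} (hv : v ≠ 0) : ∃ (a : K) (l : ι₀), a ≠ 0 ∧ a • u l = v := by
  obtain ⟨l, hl⟩ := hu.bijective.2 (Projectivization.mk K v hv)
  obtain ⟨a, ha⟩ := (Projectivization.mk_eq_mk_iff' K v (u l) hv (hu.ne_zero l)).mp hl.symm
  exact ⟨a, l, fun h => hv (by rw [← ha, h, zero_smul]), ha⟩

theorem eq_of_smul_eq {a b : K} {l l' : ι₀} (ha : a ≠ 0) (h : a • u l = b • u l') :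
    l = l' ∧ a = b := by
  have hb : b ≠ 0 := by
    rintro rfl
    simp [ha, hu.ne_zero l] at h
  have hll : l = l' := hu.bijective.1 <| (Projectivization.mk_eq_mk_iff' K _ _ _ _).mpr
    ⟨a⁻¹ * b, by rw [mul_smul, ← h, inv_smul_smul₀ ha]⟩
  subst hll
  exact ⟨rfl, smul_left_injective K (hu.ne_zero l) h⟩

theorem smul_add_smul_eq_zero {a b : K} {l l' : ι₀} (hll : l ≠ l')
    (h : a • u l + b • u l' = 0) : a = 0 ∧ b = 0 := by
  by_cases ha : a = 0
  · subst ha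
    simpa [hu.ne_zero l'] using h
  · exact absurd (hu.eq_of_smul_eq ha (eq_neg_of_add_eq_zero_left h ▸ (neg_smul b _).symm)).1 hll

theorem three_le_hammingNorm [Fintype ι₀] [DecidableEq K] {y : ι₀ → K} (hy : y ≠ 0)
    (h : ∑ m, y m • u m = 0) : 3 ≤ hammingNorm y := by
  classical
  by_contra hlt
  set s := Finset.univ.filter fun m => y m ≠ 0 with hs
  have hns : hammingNorm y = s.card := by rw [hs, hammingNorm]
  have hsum : ∑ m ∈ s, y m • u m = 0 := by
    rw [hs, Finset.sum_filter_of_ne fun m _ hm => left_ne_zero_of_smul hm, h]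
  have hmem : ∀ m ∈ s, y m ≠ 0 := by simp [hs]
  obtain h1 | h2 : s.card = 1 ∨ s.card = 2 := by
    obtain ⟨m, hm⟩ := Function.ne_iff.mp hy
    have : 0 < s.card := Finset.card_pos.mpr ⟨m, by simpa [hs] using hm⟩
    omega
  · obtain ⟨m, hm⟩ := Finset.card_eq_one.mp h1
    rw [hm, Finset.sum_singleton] at hsum
    exact hmem m (by simp [hm]) ((smul_eq_zero.mp hsum).resolve_right (hu.ne_zero m))
  · obtain ⟨m, m', hmm, hm⟩ := Finset.card_eq_two.mp h2
    rw [hm, Finset.sum_pair hmm] at hsum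
    exact hmem m (by simp [hm]) (hu.smul_add_smul_eq_zero hmm hsum).1

theorem exists_three_term [Fintype ι₀] [DecidableEq K] {l l' : ι₀} (hll : l ≠ l') :
    ∃ y : ι₀ → K, y l ≠ 0 ∧ y l' ≠ 0 ∧ hammingNorm y ≤ 3 ∧ ∑ m, y m • u m = 0 := by
  classical
  have hne : u l + u l' ≠ 0 := fun h0 =>
    one_ne_zero (hu.smul_add_smul_eq_zero (a := 1) (b := 1) hll (by simpa using h0)).1
  obtain ⟨a, l'', ha, hsum⟩ := hu.exists_smul_eq hne
  have hl : l'' ≠ l := by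
    rintro rfl
    exact one_ne_zero (hu.smul_add_smul_eq_zero (a := 1 - a) (b := 1) hll
      (by rw [sub_smul, hsum]; simp)).2
  have hl' : l'' ≠ l' := by
    rintro rfl
    exact one_ne_zero (hu.smul_add_smul_eq_zero (a := 1) (b := 1 - a) hll
      (by rw [sub_smul, hsum]; abel_nf; simp)).1
  refine ⟨Pi.single l 1 + Pi.single l' 1 - Pi.single l'' a, ?_, ?_, ?_, ?_⟩
  · simp [hll, hl.symm]
  · simp [hll.symm, hl'.symm]
  · refine (Finset.card_le_card fun m hm => ?_).trans (Finset.card_le_three (a := l) (b := l')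
      (c := l''))
    by_contra hm'
    simp only [Finset.mem_insert, Finset.mem_singleton, not_or] at hm'
    simp [hm'.1, hm'.2.1, hm'.2.2] at hm
  · simp only [Pi.add_apply, Pi.sub_apply, add_smul, sub_smul, Finset.sum_add_distrib,
      Finset.sum_sub_distrib, Pi.single_apply, ite_smul, zero_smul, Finset.sum_ite_eq',
      Finset.mem_univ, if_true, one_smul, hsum, sub_self]

theorem exists_blockSum_eq_zero {ι : Type*} [Fintype ι] [Fintype ι₀] [DecidableEq K] (j : ι)
    {m m' : ι₀} (hmm : m ≠ m') :
    ∃ y : ι × ι₀ → K, blockSum u y = 0 ∧ hammingNorm y ≤ 3 ∧ y (j, m) ≠ 0 ∧ y (j, m') ≠ 0 := by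
  classical
  obtain ⟨y₀, hm, hm', h3, hrel⟩ := hu.exists_three_term hmm
  let y : ι × ι₀ → K := fun i => (Pi.single j y₀ : ι → ι₀ → K) i.1 i.2
  have hfst : ∀ i, y i ≠ 0 → i.1 = j := fun i hi => by
    by_contra hij
    simp [y, Pi.single_eq_of_ne hij] at hi
  refine ⟨y, funext fun j' => ?_, ?_, by simpa [y] using hm, by simpa [y] using hm'⟩
  · rcases eq_or_ne j' j with rfl | hj
    · simpa [y, blockSum] using hrel
    · simp [y, blockSum, Pi.single_eq_of_ne hj]
  · refine le_trans (Finset.card_le_card_of_injOn Prod.snd (fun i hi => ?_)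
      fun i hi i' hi' hii => ?_) h3
    · simp only [Finset.coe_filter, Finset.mem_univ, true_and] at hi ⊢
      simpa [y, hfst i hi] using hi
    · simp only [Finset.coe_filter, Finset.mem_univ, true_and] at hi hi'
      exact Prod.ext ((hfst i hi).trans (hfst i' hi').symm) hii

theorem exists_perm_smul [Finite ι₀] (τ : V ≃ₗ[K] V) :
    ∃ (r : Equiv.Perm ι₀) (c : ι₀ → K), (∀ m, c m ≠ 0) ∧ ∀ m, τ (u m) = c m • u (r m) := by
  choose c r hc hr using fun m => hu.exists_smul_eq ((τ.map_ne_zero_iff).mpr (hu.ne_zero m))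
  have hr_inj : Function.Injective r := fun m m' hmm => by
    refine (hu.eq_of_smul_eq (b := c m) (hc m') (τ.injective ?_)).1
    rw [map_smul, map_smul, ← hr, ← hr, hmm, smul_smul, smul_smul, mul_comm]
  exact ⟨Equiv.ofBijective r (Finite.injective_iff_bijective.mp hr_inj), c, hc,
    fun m => (hr m).symm⟩

theorem fst_eq_of_hammingNorm_le_three {ι : Type*} [Fintype ι] [Fintype ι₀] [DecidableEq K]
    {z : ι × ι₀ → K} (hz : blockSum u z = 0) (h3 : hammingNorm z ≤ 3) {i i' : ι × ι₀}
    (hi : z i ≠ 0) (hi' : z i' ≠ 0) : i.1 = i'.1 := by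
  classical
  by_contra hne
  set block : ι₀ → K := fun m => z (i.1, m)
  have h3' : 3 ≤ hammingNorm block :=
    hu.three_le_hammingNorm (Function.ne_iff.mpr ⟨i.2, hi⟩) (congrFun hz i.1)
  have hsub : insert i' ((Finset.univ.filter fun m => block m ≠ 0).image (Prod.mk i.1)) ⊆
      Finset.univ.filter fun k => z k ≠ 0 := by
    intro k hk
    simp only [Finset.mem_insert, Finset.mem_image, Finset.mem_filter, Finset.mem_univ,
      true_and, block] at hk ⊢
    rcases hk with rfl | ⟨m, hm, rfl⟩ <;> assumption
  have hnot : i' ∉ (Finset.univ.filter fun m => block m ≠ 0).image (Prod.mk i.1) := by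
    simp only [Finset.mem_image]
    rintro ⟨m, -, rfl⟩
    exact hne rfl
  have := Finset.card_le_card hsub
  rw [Finset.card_insert_of_notMem hnot,
    Finset.card_image_of_injective _ (Prod.mk_right_injective i.1)] at this
  unfold hammingNorm at h3 h3'
  omega

end IsProjEnumeration

end ProjEnumeration

section Trace

variable {K L : Type*} [Field K] [Field L] [Algebra K L]

/-- The paper's `φ`, with an arbitrary family `u` in place of `ξ ^ 1, …, ξ ^ n₀`. -/
noncomputable def concatMap (K : Type*) {L ι ι₀ : Type*} [Field K] [Field L] [Algebra K L]
    (u : ι₀ → L) :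
    (ι → L) →ₗ[K] (ι × ι₀ → K) :=
  LinearMap.pi fun i => Algebra.trace K L ∘ₗ LinearMap.mulRight K (u i.2) ∘ₗ LinearMap.proj i.1

theorem concatMap_apply {ι ι₀ : Type*} (u : ι₀ → L) (v : ι → L) (i : ι × ι₀) :
    concatMap K u v i = Algebra.trace K L (v i.1 * u i.2) :=
  rfl

theorem concatMap_dotProduct {ι ι₀ : Type*} [Fintype ι] [Fintype ι₀] (u : ι₀ → L) (v : ι → L)
    (y : ι × ι₀ → K) :
    concatMap K u v ⬝ᵥ y = Algebra.trace K L (v ⬝ᵥ blockSum u y) := by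
  simp only [dotProduct, blockSum, concatMap_apply, Fintype.sum_prod_type, map_sum,
    Finset.mul_sum, mul_smul_comm, map_smul, smul_eq_mul, mul_comm]

variable [FiniteDimensional K L] [Algebra.IsSeparable K L]

theorem eq_zero_of_forall_trace_mul_eq_zero {x : L}
    (h : ∀ z, Algebra.trace K L (z * x) = 0) : x = 0 :=
  (traceForm_nondegenerate K L).2 x h

theorem LinearEquiv.exists_trace_mul_eq (τ : L ≃ₗ[K] L) :
    ∃ τ' : L ≃ₗ[K] L, ∀ z x, Algebra.trace K L (τ z * x) = Algebra.trace K L (z * τ' x) := by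
  let e := (Algebra.traceForm K L).toDual (traceForm_nondegenerate K L)
  refine ⟨e.trans (τ.dualMap.trans e.symm), fun z x => ?_⟩
  rw [mul_comm z, ← Algebra.traceForm_apply, ← Algebra.traceForm_apply]
  simp [e, LinearEquiv.dualMap_apply, LinearMap.BilinForm.toDual_def, Algebra.traceForm_apply,
    mul_comm]

end Trace

namespace IsProjEnumeration

variable {K L ι₀ : Type*} [Field K] [Field L] [Algebra K L] [FiniteDimensional K L]
  [Algebra.IsSeparable K L] {u : ι₀ → L} (hu : IsProjEnumeration K u)
include hu

theorem eq_zero_of_trace_mul_eq_zero {z : L} (h : ∀ l, Algebra.trace K L (z * u l) = 0) :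
    z = 0 := by
  refine eq_zero_of_forall_trace_mul_eq_zero (K := K) fun x => ?_
  by_cases hx : x = 0
  · simp [hx]
  obtain ⟨a, l, -, rfl⟩ := hu.exists_smul_eq hx
  rw [smul_mul_assoc, map_smul, mul_comm, h, smul_zero]

theorem exists_perm_trace_mul_eq [Finite ι₀] (τ : L ≃ₗ[K] L) :
    ∃ (r : Equiv.Perm ι₀) (c : ι₀ → K), (∀ m, c m ≠ 0) ∧
      ∀ z m, Algebra.trace K L (τ z * u m) = c m * Algebra.trace K L (z * u (r m)) := by
  obtain ⟨τ', hτ'⟩ := τ.exists_trace_mul_eq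
  obtain ⟨r, c, hc, hr⟩ := hu.exists_perm_smul τ'
  exact ⟨r, c, hc, fun z m => by rw [hτ', hr, mul_smul_comm, map_smul, smul_eq_mul]⟩

theorem exists_linearEquiv_of_trace_mul_eq (σ : L → L) {ρ : ι₀ → ι₀}
    (hρ : Function.Surjective ρ) {c : ι₀ → K} (hc : ∀ m, c m ≠ 0)
    (h : ∀ z m, Algebra.trace K L (σ z * u m) = c m * Algebra.trace K L (z * u (ρ m))) :
    ∃ τ : L ≃ₗ[K] L, ⇑τ = σ := by
  have hadd : ∀ x y, σ (x + y) = σ x + σ y := fun x y =>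
    sub_eq_zero.mp <| hu.eq_zero_of_trace_mul_eq_zero fun m => by
      rw [sub_mul, add_mul, map_sub, map_add, h, h, h, add_mul, map_add]
      ring
  have hsmul : ∀ (a : K) x, σ (a • x) = a • σ x := fun a x =>
    sub_eq_zero.mp <| hu.eq_zero_of_trace_mul_eq_zero fun m => by
      rw [sub_mul, map_sub, h, smul_mul_assoc, smul_mul_assoc, map_smul, map_smul, h,
        smul_eq_mul, smul_eq_mul]
      ring
  let f : L →ₗ[K] L := ⟨⟨σ, hadd⟩, hsmul⟩
  have hinj : Function.Injective f := (injective_iff_map_eq_zero f).mpr fun x hx =>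
    hu.eq_zero_of_trace_mul_eq_zero fun l => by
      obtain ⟨m, rfl⟩ := hρ l
      have := h x m
      rw [show σ x = 0 from hx, zero_mul, map_zero] at this
      exact (mul_eq_zero.mp this.symm).resolve_left (hc m)
  exact ⟨LinearEquiv.ofInjectiveEndo f hinj, rfl⟩

variable {ι : Type*}

theorem concatMap_injective : Function.Injective (concatMap K u (ι := ι)) :=
  (injective_iff_map_eq_zero _).mpr fun _ hv => funext fun j =>
    hu.eq_zero_of_trace_mul_eq_zero fun l => congrFun hv (j, l)

theorem eq_of_forall_mul_concatMap_eq {i i' : ι × ι₀} {a b : K} (ha : a ≠ 0)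
    (h : ∀ v, a * concatMap K u v i = b * concatMap K u v i') : i = i' ∧ a = b := by
  classical
  obtain ⟨j, m⟩ := i
  obtain ⟨j', m'⟩ := i'
  have hz : ∀ z, Algebra.trace K L (z * (a • u m))
      = Algebra.trace K L ((Pi.single j z : ι → L) j' * (b • u m')) := fun z => by
    simpa [concatMap_apply, mul_smul_comm] using h (Pi.single j z)
  by_cases hj : j = j'
  · subst hj
    have hab : a • u m = b • u m' := sub_eq_zero.mp <|
      eq_zero_of_forall_trace_mul_eq_zero (K := K) fun z => by
        rw [mul_sub, map_sub, hz, Pi.single_eq_same, sub_self]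
    obtain ⟨rfl, rfl⟩ := hu.eq_of_smul_eq ha hab
    exact ⟨rfl, rfl⟩
  · have : a • u m = 0 := eq_zero_of_forall_trace_mul_eq_zero (K := K) fun z => by
      rw [hz, Pi.single_eq_of_ne (Ne.symm hj), zero_mul, map_zero]
    exact absurd this (smul_ne_zero ha (hu.ne_zero m))

theorem eq_of_comp_concatMap_eq {M M' : Equiv.Perm (ι × ι₀ → K)} (hM : IsMonomial M)
    (hM' : IsMonomial M') (h : ∀ v, M (concatMap K u v) = M' (concatMap K u v)) : M = M' := by
  obtain ⟨π, c, hc, hM⟩ := hM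
  obtain ⟨π', c', -, hM'⟩ := hM'
  have key : ∀ i, π⁻¹ i = π'⁻¹ i ∧ c i = c' i := fun i =>
    hu.eq_of_forall_mul_concatMap_eq (hc i) fun v => by rw [← hM, ← hM', h]
  exact Equiv.ext fun v => funext fun i => by rw [hM, hM', (key i).1, (key i).2]

end IsProjEnumeration

namespace Equiv.Perm

variable {ι ι₀ : Type*}

theorem exists_fst_apply_eq [Finite ι] [Nonempty ι₀] (P : Equiv.Perm (ι × ι₀))
    (h : ∀ j m m', (P (j, m)).1 = (P (j, m')).1) : ∃ π : Equiv.Perm ι, ∀ i, (P i).1 = π i.1 := by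
  let m₀ : ι₀ := Classical.arbitrary ι₀
  have hsurj : Function.Surjective fun j => (P (j, m₀)).1 := fun j' =>
    ⟨(P⁻¹ (j', m₀)).1, by
      simp only
      rw [← h _ (P⁻¹ (j', m₀)).2 m₀, Prod.mk.eta]
      exact congrArg Prod.fst (P.apply_symm_apply _)⟩
  exact ⟨Equiv.ofBijective _ (Finite.surjective_iff_bijective.mp hsurj),
    fun i => h i.1 i.2 m₀⟩

variable {P : Equiv.Perm (ι × ι₀)} {π : Equiv.Perm ι} (hπ : ∀ i, (P i).1 = π i.1)
include hπ

theorem fst_inv_apply_eq (i : ι × ι₀) : (P⁻¹ i).1 = π⁻¹ i.1 :=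
  eq_inv_iff_eq.mpr (by rw [← hπ]; exact congrArg Prod.fst (P.apply_symm_apply i))

theorem surjective_snd_inv_apply (j : ι) : Function.Surjective fun m => (P⁻¹ (j, m)).2 :=
  fun l => by
    have h : P (π⁻¹ j, l) = (j, (P (π⁻¹ j, l)).2) :=
      Prod.ext (by rw [hπ]; exact π.apply_symm_apply j) rfl
    refine ⟨(P (π⁻¹ j, l)).2, ?_⟩
    simp only
    rw [← h]
    exact congrArg Prod.snd (P.symm_apply_apply _)

end Equiv.Perm

theorem exists_mem_apply_eq {ι F : Type*} [Fintype ι] [Field F] [DecidableEq F]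
    {C : Submodule F (ι → F)}
    (hC : ∀ w ∈ dualSet (C : Set (ι → F)), w ≠ 0 → 2 ≤ hammingNorm w) (j : ι) (z : F) :
    ∃ w ∈ C, w j = z := by
  classical
  by_cases h : ∃ w ∈ C, w j ≠ 0
  · obtain ⟨w, hw, hwj⟩ := h
    exact ⟨(z / w j) • w, C.smul_mem _ hw, by simp [hwj]⟩
  · simp only [not_exists, not_and, not_not] at h
    have hmem : (Pi.single j 1 : ι → F) ∈ dualSet (C : Set (ι → F)) := fun w hw => by
      change w ⬝ᵥ Pi.single j 1 = 0
      rw [dotProduct_single, h w hw, zero_mul]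
    have hle : hammingNorm (Pi.single j 1 : ι → F) ≤ 1 := by
      refine (Finset.card_le_card fun i hi => Finset.mem_singleton.mpr ?_).trans
        (Finset.card_singleton j).le
      by_contra hij
      simp [Pi.single_eq_of_ne hij] at hi
    have := hC _ hmem (Pi.single_ne_zero_iff.mpr one_ne_zero)
    omega

section Code

variable {K L ι ι₀ : Type*} [Field K] [Field L] [Algebra K L] [Fintype ι] [Fintype ι₀]
  {u : ι₀ → L} {C : Submodule L (ι → L)}

theorem hammingNorm_blockSum_le {V : Type*} [AddCommGroup V] [Module K V] [DecidableEq K]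
    [DecidableEq V] (u : ι₀ → V) (y : ι × ι₀ → K) :
    hammingNorm (blockSum u y) ≤ hammingNorm y := by
  refine Finset.card_le_card_of_surjOn Prod.fst fun j hj => ?_
  simp only [Finset.coe_filter, Finset.mem_univ, true_and] at hj
  obtain ⟨m, -, hm⟩ := Finset.exists_ne_zero_of_sum_ne_zero hj
  exact ⟨(j, m), by simpa using left_ne_zero_of_smul hm, rfl⟩

theorem mem_dualSet_of_blockSum_eq_zero {y : ι × ι₀ → K} (hy : blockSum u y = 0)
    (S : Set (ι → L)) : y ∈ dualSet (concatMap K u '' S) := by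
  rintro _ ⟨v, -, rfl⟩
  change concatMap K u v ⬝ᵥ y = 0
  rw [concatMap_dotProduct, hy, dotProduct_zero, map_zero]

variable [FiniteDimensional K L] [Algebra.IsSeparable K L]

theorem blockSum_mem_dualSet {y : ι × ι₀ → K}
    (hy : y ∈ dualSet (concatMap K u '' (C : Set (ι → L)))) :
    blockSum u y ∈ dualSet (C : Set (ι → L)) := fun w hw =>
  eq_zero_of_forall_trace_mul_eq_zero (K := K) fun z => by
    change Algebra.trace K L (z * (w ⬝ᵥ blockSum u y)) = 0
    rw [← smul_eq_mul, ← smul_dotProduct, ← concatMap_dotProduct]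
    exact hy _ ⟨z • w, C.smul_mem z hw, rfl⟩

theorem blockSum_eq_zero_of_hammingNorm_le_three [DecidableEq K] [DecidableEq L]
    (hC : ∀ w ∈ dualSet (C : Set (ι → L)), w ≠ 0 → 4 ≤ hammingNorm w) {y : ι × ι₀ → K}
    (hy : y ∈ dualSet (concatMap K u '' (C : Set (ι → L)))) (h3 : hammingNorm y ≤ 3) :
    blockSum u y = 0 := by
  by_contra hne
  have := hC _ (blockSum_mem_dualSet hy) hne
  have := hammingNorm_blockSum_le u y
  omega

end Code

theorem mem_autLSet_iff {K L ι : Type*} [Field K] [Field L] [Algebra K L] {C : Set (ι → L)}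
    {e : Equiv.Perm (ι → L)} :
    e ∈ autLSet K C ↔
      (∃ (π : Equiv.Perm ι) (τ : ι → L ≃ₗ[K] L), ∀ v i, e v i = τ i (v (π⁻¹ i))) ∧
        ⇑e '' C = C := by
  refine and_congr_left' ⟨fun ⟨π, σ, hadd, hsmul, he⟩ => ⟨π, fun i =>
    { σ i with
      map_add' := hadd i
      map_smul' := fun b x => by simpa [Algebra.smul_def] using hsmul i b x }, he⟩,
    fun ⟨π, τ, he⟩ => ⟨π, fun i => (τ i).toEquiv, fun i => (τ i).map_add,
      fun i b x => by simpa [Algebra.smul_def] using (τ i).map_smul b x, he⟩⟩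

namespace IsProjEnumeration

variable {K L ι ι₀ : Type*} [Field K] [Field L] [Algebra K L] [FiniteDimensional K L]
  [Algebra.IsSeparable K L] [Fintype ι₀] {u : ι₀ → L} {C : Submodule L (ι → L)}
  (hu : IsProjEnumeration K u)
include hu

theorem exists_semiconj_of_mem_autLSet {e : Equiv.Perm (ι → L)}
    (he : e ∈ autLSet K (C : Set (ι → L))) :
    ∃ M ∈ autMSet (concatMap K u '' (C : Set (ι → L))),
      Function.Semiconj (concatMap K u) e M := by
  obtain ⟨⟨π, τ, he⟩, heC⟩ := mem_autLSet_iff.mp he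
  choose r c hc hr using fun j => hu.exists_perm_trace_mul_eq (τ j)
  let M := monomialPerm (Equiv.prodShear π⁻¹ r)⁻¹ (fun i => c i.1 i.2) fun i => hc i.1 i.2
  have hM : Function.Semiconj (concatMap K u) e M := fun v => funext fun i => by
    rw [monomialPerm_apply, inv_inv, concatMap_apply, concatMap_apply, he, hr]
    rfl
  exact ⟨M, ⟨isMonomial_monomialPerm _ _ _, by rw [← hM.set_image, heC]⟩, hM⟩

variable [Fintype ι] [DecidableEq L]
  (hC : ∀ w ∈ dualSet (C : Set (ι → L)), w ≠ 0 → 4 ≤ hammingNorm w)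

include hC in
/-- The transpose-inverse of the automorphism carries a weight-three dual word inside block `j`
through `(j, m)` and `(j, m')` to a weight-three dual word, whose support must lie in one block. -/
theorem fst_apply_eq_of_image_eq {P : Equiv.Perm (ι × ι₀)} {c : ι × ι₀ → K}
    (hc : ∀ i, c i ≠ 0) (hMC : ⇑(monomialPerm P c hc) '' (concatMap K u '' (C : Set (ι → L)))
      = concatMap K u '' (C : Set (ι → L))) (j : ι) (m m' : ι₀) :
    (P (j, m)).1 = (P (j, m')).1 := by
  classical
  rcases eq_or_ne m m' with rfl | hmm
  · rfl
  obtain ⟨y, hy, hy3, hm, hm'⟩ := hu.exists_blockSum_eq_zero j hmm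
  let N := monomialPerm P (fun i => (c i)⁻¹) (fun i => inv_ne_zero (hc i))
  have hND := image_dualSet_of_dotProduct_eq (monomialPerm_dotProduct_monomialPerm_inv P c hc) hMC
  have hz : N y ∈ dualSet (concatMap K u '' (C : Set (ι → L))) :=
    hND ▸ Set.mem_image_of_mem N (mem_dualSet_of_blockSum_eq_zero hy _)
  have hz3 : hammingNorm (N y) ≤ 3 := (isMonomial_monomialPerm _ _ _).hammingNorm_apply y ▸ hy3
  have hNy : ∀ i, y i ≠ 0 → N y (P i) ≠ 0 := fun i hi => by
    simp [N, monomialPerm_apply, hc, hi]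
  exact hu.fst_eq_of_hammingNorm_le_three (blockSum_eq_zero_of_hammingNorm_le_three hC hz hz3)
    hz3 (hNy _ hm) (hNy _ hm')

omit [Fintype ι₀] in
include hC in
theorem exists_linearEquiv_of_image_eq {P : Equiv.Perm (ι × ι₀)} {c : ι × ι₀ → K}
    (hc : ∀ i, c i ≠ 0) (hMC : ⇑(monomialPerm P c hc) '' (concatMap K u '' (C : Set (ι → L)))
      = concatMap K u '' (C : Set (ι → L))) {π : Equiv.Perm ι} (hπ : ∀ i, (P i).1 = π i.1) :
    ∃ τ : ι → L ≃ₗ[K] L, ∀ j z m,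
      Algebra.trace K L (τ j z * u m) = c (j, m) * Algebra.trace K L (z * u (P⁻¹ (j, m)).2) := by
  choose w hwC hw using fun j z =>
    exists_mem_apply_eq (fun w hw hne => (hC w hw hne).trans' (by norm_num)) (π⁻¹ j) z
  have hlift : ∀ j z, ∃ w' ∈ C, concatMap K u w' = monomialPerm P c hc (concatMap K u (w j z)) :=
    fun j z => by
      have h := Set.mem_image_of_mem (monomialPerm P c hc)
        (Set.mem_image_of_mem (concatMap K u) (hwC j z))
      rwa [hMC] at h
  choose w' _ hw' using hlift
  have key : ∀ j z m, Algebra.trace K L (w' j z j * u m)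
      = c (j, m) * Algebra.trace K L (z * u (P⁻¹ (j, m)).2) := fun j z m => by
    have := congrFun (hw' j z) (j, m)
    rwa [monomialPerm_apply, concatMap_apply, concatMap_apply, P.fst_inv_apply_eq hπ, hw] at this
  choose τ hτ using fun j => hu.exists_linearEquiv_of_trace_mul_eq (fun z => w' j z j)
    (P.surjective_snd_inv_apply hπ j) (fun m => hc (j, m)) (key j)
  exact ⟨τ, fun j z m => by rw [hτ, key]⟩

include hC in
theorem exists_semiconj_of_mem_autMSet {M : Equiv.Perm (ι × ι₀ → K)}
    (hM : M ∈ autMSet (concatMap K u '' (C : Set (ι → L)))) :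
    ∃ e ∈ autLSet K (C : Set (ι → L)), Function.Semiconj (concatMap K u) e M := by
  obtain ⟨⟨P, c, hc, hMP⟩, hMC⟩ := hM
  obtain rfl : M = monomialPerm P c hc := Equiv.ext fun v => funext (hMP v)
  have : Nonempty ι₀ := ⟨(hu.bijective.2 (Projectivization.mk K (1 : L) one_ne_zero)).choose⟩
  obtain ⟨π, hπ⟩ := P.exists_fst_apply_eq (hu.fst_apply_eq_of_image_eq hC hc hMC)
  obtain ⟨τ, hτ⟩ := hu.exists_linearEquiv_of_image_eq hC hc hMC hπ
  let e : Equiv.Perm (ι → L) :=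
    (Equiv.piCongrLeft' (fun _ => L) π).trans (Equiv.piCongrRight fun j => (τ j).toEquiv)
  have he : Function.Semiconj (concatMap K u) e (monomialPerm P c hc) := fun v => funext fun i => by
    obtain ⟨j, m⟩ := i
    change Algebra.trace K L (τ j (v (π⁻¹ j)) * u m) = _
    rw [hτ, monomialPerm_apply, concatMap_apply, P.fst_inv_apply_eq hπ]
  refine ⟨e, mem_autLSet_iff.mpr ⟨⟨π, τ, fun v i => rfl⟩, ?_⟩, he⟩
  exact Set.image_injective.mpr hu.concatMap_injective (by rw [he.set_image, hMC])

include hC in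
theorem mulBijOn_autLSet_autMSet :
    MulBijOn (autLSet K (C : Set (ι → L))) (autMSet (concatMap K u '' (C : Set (ι → L)))) := by
  refine MulBijOn.of_rel (fun e M => IsMonomial M ∧ Function.Semiconj (concatMap K u) e M)
    (fun e he => ?_) (fun M hM => ?_) ?_ ?_ ?_
  · obtain ⟨M, hM, hsemi⟩ := hu.exists_semiconj_of_mem_autLSet he
    exact ⟨M, hM, hM.1, hsemi⟩
  · obtain ⟨e, he, hsemi⟩ := hu.exists_semiconj_of_mem_autMSet hC hM
    exact ⟨e, he, hM.1, hsemi⟩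
  · rintro e M M' ⟨hM, h⟩ ⟨hM', h'⟩
    exact hu.eq_of_comp_concatMap_eq hM hM' fun v => (h v).symm.trans (h' v)
  · rintro e e' M ⟨-, h⟩ ⟨-, h'⟩
    exact Equiv.ext fun v => hu.concatMap_injective ((h v).trans (h' v).symm)
  · rintro e e' M M' ⟨hM, h⟩ ⟨hM', h'⟩
    exact ⟨hM.mul hM', h.comp_right h'⟩

end IsProjEnumeration

theorem Nat.coprime_geomSum_div {p k : ℕ} (hp : 2 ≤ p) (h : Nat.Coprime k (p - 1)) :
    Nat.Coprime ((p ^ k - 1) / (p - 1)) (p - 1) := by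
  have hmod : (p ^ k - 1) / (p - 1) ≡ k [MOD p - 1] := by
    rw [← Nat.geomSum_eq hp]
    simpa using Nat.ModEq.sum fun i (_ : i ∈ Finset.range k) =>
      (Nat.modEq_sub (by omega : 1 ≤ p)).pow i
  rw [Nat.Coprime, hmod.gcd_eq]
  exact h

/-- As `n₀` is prime to `|K| - 1`, the group `⟨ξ⟩` meets `Kˣ` trivially, so the powers of `ξ`
lie on distinct `K`-lines; and there are exactly `n₀` lines. -/
theorem isProjEnumeration_pow {K L : Type*} [Field K] [Field L] [Algebra K L] [Fintype K]
    [Finite L] {n₀ : ℕ} {ξ : L} (hξ : orderOf ξ = n₀) (hcard : Nat.card (Projectivization K L) = n₀)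
    (hcop : Nat.Coprime n₀ (Fintype.card K - 1)) :
    IsProjEnumeration K fun l : Fin n₀ => ξ ^ ((l : ℕ) + 1) := by
  have hn₀ : 0 < n₀ := hcard ▸ Nat.card_pos
  have hξ₀ : ξ ≠ 0 := by
    rintro rfl
    simpa [hn₀.ne', hξ] using pow_orderOf_eq_one (0 : L)
  have hne : ∀ l : Fin n₀, ξ ^ ((l : ℕ) + 1) ≠ 0 := fun l => pow_ne_zero _ hξ₀
  refine ⟨hne, Function.Injective.bijective_of_nat_card_le (fun l l' h => ?_) (by simp [hcard])⟩
  obtain ⟨a, ha⟩ := (Projectivization.mk_eq_mk_iff' K _ _ (hne l) (hne l')).mp h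
  have ha₀ : a ≠ 0 := by
    rintro rfl
    exact hne l (by simp [← ha])
  have h₁ : algebraMap K L a = 1 := by
    have hK : algebraMap K L a ^ (Fintype.card K - 1) = 1 := by
      rw [← map_pow, FiniteField.pow_card_sub_one_eq_one a ha₀, map_one]
    have hξn : ∀ m, (ξ ^ m) ^ n₀ = 1 := fun m => by
      rw [← pow_mul, mul_comm, pow_mul, ← hξ, pow_orderOf_eq_one, one_pow]
    have hn : algebraMap K L a ^ n₀ = 1 := by
      simpa only [Algebra.smul_def, mul_pow, hξn, mul_one] using congrArg (· ^ n₀) ha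
    simpa [hcop.gcd_eq_one] using pow_gcd_eq_one.mpr ⟨hn, hK⟩
  rw [Algebra.smul_def, h₁, one_mul, pow_succ, pow_succ] at ha
  exact Fin.ext (pow_injOn_Iio_orderOf (by simp [hξ]) (by simp [hξ])
    (mul_right_cancel₀ hξ₀ ha)).symm

theorem stmt_6_general (p k n₀ : ℕ) (hcop : Nat.Coprime k (p - 1))
    (Fp Fq : Type) [Field Fp] [Field Fq] [Fintype Fp] [Fintype Fq]
    [DecidableEq Fq] [Algebra Fp Fq]
    (hcp : Fintype.card Fp = p) (hcq : Fintype.card Fq = p ^ k)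
    (hn₀ : n₀ = (p ^ k - 1) / (p - 1))
    (ξ : Fq) (hξ : orderOf ξ = n₀)
    (n : ℕ)
    (Φ : (Fin n → Fq) → (Fin n × Fin n₀ → Fp))
    (hΦ : ∀ (v : Fin n → Fq) (jl : Fin n × Fin n₀),
      Φ v jl = Algebra.trace Fp Fq (v jl.1 * ξ ^ ((jl.2 : ℕ) + 1)))
    (C : Submodule Fq (Fin n → Fq))
    (hdist : ∀ w ∈ dualSet (C : Set (Fin n → Fq)), w ≠ 0 → 4 ≤ hammingNorm w) :
    MulBijOn (autLSet Fp (C : Set (Fin n → Fq))) (autMSet (Φ '' (C : Set (Fin n → Fq)))) ∧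
    MulBijOn (autMSet (Φ '' (C : Set (Fin n → Fq))))
      (autMSet (dualSet (Φ '' (C : Set (Fin n → Fq))))) ∧
    MulBijOn (autLSet Fp (C : Set (Fin n → Fq)))
      (autMSet (dualSet (Φ '' (C : Set (Fin n → Fq))))) := by
  have hp : 2 ≤ p := hcp ▸ Fintype.one_lt_card
  have hu : IsProjEnumeration Fp fun l : Fin n₀ => ξ ^ ((l : ℕ) + 1) := by
    refine isProjEnumeration_pow hξ ?_ (hcp ▸ hn₀ ▸ Nat.coprime_geomSum_div hp hcop)
    rw [Projectivization.card'', Nat.card_eq_fintype_card, Nat.card_eq_fintype_card, hcp, hcq, hn₀]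
  obtain rfl : Φ = concatMap Fp fun l : Fin n₀ => ξ ^ ((l : ℕ) + 1) :=
    funext fun v => funext (hΦ v)
  have h₁ := hu.mulBijOn_autLSet_autMSet hdist
  have h₂ := mulBijOn_autMSet_dualSet
    ((C.restrictScalars Fp).map (concatMap Fp fun l : Fin n₀ => ξ ^ ((l : ℕ) + 1)))
  rw [Submodule.map_coe, Submodule.coe_restrictScalars] at h₂
  exact ⟨h₁, h₂, h₁.trans h₂⟩

/-- Let `C ⊆ F_q^n` be a linear code whose dual `C^⊥` has minimum Hamming
weight at least `4`.  Then the three groups `AutL_p(C)`, `AutM(φ(C))` and `AutM(φ(C)^⊥)`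
are pairwise isomorphic. -/
theorem stmt_6 (p k n₀ : ℕ) (hk : 1 ≤ k) (hcop : Nat.Coprime k (p - 1))
    (Fp Fq : Type) [Field Fp] [Field Fq] [Fintype Fp] [Fintype Fq]
    [DecidableEq Fp] [DecidableEq Fq] [Algebra Fp Fq]
    (hcp : Fintype.card Fp = p) (hcq : Fintype.card Fq = p ^ k)
    (hn₀ : n₀ = (p ^ k - 1) / (p - 1))
    (ξ : Fq) (hξ : orderOf ξ = n₀)
    (n : ℕ) (hn : 1 ≤ n)
    (Φ : (Fin n → Fq) → (Fin n × Fin n₀ → Fp))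
    (hΦ : ∀ (v : Fin n → Fq) (jl : Fin n × Fin n₀),
      Φ v jl = Algebra.trace Fp Fq (v jl.1 * ξ ^ ((jl.2 : ℕ) + 1)))
    (C : Submodule Fq (Fin n → Fq))
    (hdist : ∀ w ∈ dualSet (C : Set (Fin n → Fq)), w ≠ 0 → 4 ≤ hammingNorm w) :
    MulBijOn (autLSet Fp (C : Set (Fin n → Fq))) (autMSet (Φ '' (C : Set (Fin n → Fq)))) ∧
    MulBijOn (autMSet (Φ '' (C : Set (Fin n → Fq))))
      (autMSet (dualSet (Φ '' (C : Set (Fin n → Fq))))) ∧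
    MulBijOn (autLSet Fp (C : Set (Fin n → Fq)))
      (autMSet (dualSet (Φ '' (C : Set (Fin n → Fq))))) :=
  stmt_6_general p k n₀ hcop Fp Fq hcp hcq hn₀ ξ hξ n Φ hΦ C hdist
end

section
/- Let m ≥ 1 and q = 2^m. Define φ : F_q → F_2^{q−1} by φ(β) = (Tr_{q/2}(βθ^1), …, Tr_{q/2}(βθ^{q−1})), extended coordinatewise to F_q^{q+1} → F_2^{(q+1)(q−1)}. Since q+1 and q−1 are coprime, the map l ↦ (l mod (q+1), l mod (q−1)) is a bijection from Z/(q²−1) to Z/(q+1) × Z/(q−1); index the (q²−1) coordinates of the concatenated code by pairs (j, i) accordingly. Then under this coordinate identification the concatenation φ(M_q^⊥) equals K_q^⊥ = {(Tr_{q²/2}(δα^l) + Tr_{q/2}(cθ^l))_{l=1,…,q²−1} : c ∈ F_q, δ ∈ F_{q²}}. In particular, φ(M_q^⊥) has exactly 2^{3m} codewords and (under this identification) is invariant under the cyclic shift of coordinates, i.e., it is a binary cyclic code of parameters [q²−1, 3m] with nonzeros α and α^{1+q}. -/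
/-!
Write `ζ = α ^ (q - 1)`. If `l ≡ j [MOD q + 1]` and `l ≡ i [MOD q - 1]` then
`ζ ^ j * θ ^ i = α ^ (2 q l)`, so by transitivity of the trace the `(j, i)` coordinate of
`φ(c + Tr_{K/F}(δ ^ (2q) ζ ^ j))` is `Tr_{F/2}(c θ ^ l) + Tr_{K/2}((δ α ^ l) ^ (2q))`, and the
Frobenius invariance of the trace turns this into the `l`-th coordinate of a codeword of `K_q^⊥`.
As `δ ↦ δ ^ (2q)` is bijective, `φ(M_q^⊥)` is `K_q^⊥` after reindexing.

The parametrization `(c, δ)` of `K_q^⊥` is injective: if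
`Tr_{K/2}(δ α ^ n) = Tr_{F/2}(c θ ^ n)` for all `n`, summing over `n + (q - 1) s`, `s ≤ q`,
kills the left side (the powers of `ζ` sum to `0`) and gives `q + 1 ≡ 1` copies of the right
side; nondegeneracy of the trace forms then gives `c = 0` and `δ = 0`.
-/

theorem pow_eq_pow_of_modEq_orderOf {M : Type*} [Monoid M] {x : M} {a b : ℕ}
    (h : a ≡ b [MOD orderOf x]) : x ^ a = x ^ b := by
  rw [← pow_mod_orderOf, h, pow_mod_orderOf]

theorem Nat.add_one_mul_sub_one (q : ℕ) : (q + 1) * (q - 1) = q ^ 2 - 1 := by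
  simpa using (Nat.sq_sub_sq q 1).symm

theorem Nat.coprime_add_one_sub_one_of_even {q : ℕ} (hq : Even q) : (q + 1).Coprime (q - 1) := by
  rcases Nat.eq_zero_or_pos q with rfl | hpos
  · simp
  rw [show q + 1 = 2 + (q - 1) by omega, Nat.coprime_add_self_left, Nat.coprime_two_left]
  exact Nat.Even.sub_odd hpos hq odd_one

theorem Fin.val_add_one_modEq {N : ℕ} [NeZero N] (l : Fin N) :
    ((l + 1 : Fin N) : ℕ) ≡ l + 1 [MOD N] := by
  rw [Fin.val_add, Fin.val_one']
  exact (Nat.mod_modEq _ _).trans ((Nat.mod_modEq 1 N).add_left _)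

theorem Fin.exists_val_add_one_modEq {N : ℕ} [NeZero N] (n : ℕ) :
    ∃ l : Fin N, (l : ℕ) + 1 ≡ n [MOD N] := by
  refine ⟨⟨(n + N - 1) % N, Nat.mod_lt _ (NeZero.pos N)⟩, ?_⟩
  have hN := NeZero.pos N
  calc (n + N - 1) % N + 1 ≡ n + N - 1 + 1 [MOD N] := (Nat.mod_modEq _ _).add_right 1
    _ = n + N := by omega
    _ ≡ n [MOD N] := Nat.add_mod_right n N

theorem bijective_of_modEq_of_coprime {a b n : ℕ} (hab : a.Coprime b) (hn : a * b = n)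
    (e : Fin n → Fin a × Fin b) (h₁ : ∀ l, (e l).1 ≡ l [MOD a])
    (h₂ : ∀ l, (e l).2 ≡ l [MOD b]) : Function.Bijective e := by
  refine (Fintype.bijective_iff_injective_and_card e).2 ⟨fun l l' hll' => ?_, by simp [hn]⟩
  have hmod : (l : ℕ) ≡ l' [MOD a * b] := (Nat.modEq_and_modEq_iff_modEq_mul hab).1
    ⟨(h₁ l).symm.trans (by rw [hll']; exact h₁ l'),
      (h₂ l).symm.trans (by rw [hll']; exact h₂ l')⟩
  rw [hn] at hmod
  exact Fin.ext (Nat.ModEq.eq_of_lt_of_lt hmod l.isLt l'.isLt)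

section Order

variable {M : Type*} [Monoid M] {x : M} {q : ℕ}

theorem orderOf_pow_add_one (hx : orderOf x = q ^ 2 - 1) : orderOf (x ^ (q + 1)) = q - 1 := by
  rw [orderOf_pow_of_dvd q.succ_ne_zero ⟨q - 1, by rw [hx, Nat.add_one_mul_sub_one]⟩, hx,
    ← Nat.add_one_mul_sub_one, Nat.mul_div_cancel_left _ q.succ_pos]

theorem orderOf_pow_sub_one (hq : 2 ≤ q) (hx : orderOf x = q ^ 2 - 1) :
    orderOf (x ^ (q - 1)) = q + 1 := by
  rw [orderOf_pow_of_dvd (by omega) ⟨q + 1, by rw [hx, ← Nat.add_one_mul_sub_one, mul_comm]⟩,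
    hx, ← Nat.add_one_mul_sub_one, Nat.mul_div_cancel _ (by omega)]

end Order

theorem exists_pow_eq_of_orderOf_eq_card_sub_one {L : Type*} [Field L] [Fintype L] {a : L}
    (ha : orderOf a = Fintype.card L - 1) {y : L} (hy : y ≠ 0) : ∃ n : ℕ, a ^ n = y := by
  have : NeZero (orderOf a) := ⟨by have := Fintype.one_lt_card (α := L); omega⟩
  obtain ⟨n, -, hn⟩ := (IsPrimitiveRoot.orderOf a).eq_pow_of_pow_eq_one
    (ha ▸ FiniteField.pow_card_sub_one_eq_one y hy)
  exact ⟨n, hn⟩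

theorem eq_zero_of_forall_trace_mul_pow_eq_zero {K L : Type*} [Field K] [Field L] [Fintype L]
    [Algebra K L] [FiniteDimensional K L] [Algebra.IsSeparable K L] {a : L}
    (ha : orderOf a = Fintype.card L - 1) {c : L}
    (h : ∀ n : ℕ, Algebra.trace K L (c * a ^ n) = 0) : c = 0 := by
  refine (traceForm_nondegenerate K L).1 c fun y => ?_
  rcases eq_or_ne y 0 with rfl | hy
  · simp
  obtain ⟨n, rfl⟩ := exists_pow_eq_of_orderOf_eq_card_sub_one ha hy
  exact h n

theorem Algebra.trace_add_trace_mul (k F K : Type*) [Field k] [Field F] [Field K] [Algebra k F]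
    [Algebra k K] [Algebra F K] [IsScalarTower k F K] [FiniteDimensional k F]
    [FiniteDimensional F K] (c t : F) (x : K) :
    trace k F ((c + trace F K x) * t) = trace k K (x * algebraMap F K t) + trace k F (c * t) := by
  have : trace F K x * t = trace F K (x * algebraMap F K t) := by
    rw [mul_comm x, ← Algebra.smul_def, LinearMap.map_smul, smul_eq_mul, mul_comm]
  rw [add_mul, map_add, add_comm, this, trace_trace]

section Frobenius

variable {K L : Type*} [Field K] [Fintype K] [Field L] [Algebra K L] [Algebra.IsAlgebraic K L]

theorem FiniteField.trace_pow_card_pow (n : ℕ) (x : L) :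
    Algebra.trace K L (x ^ Fintype.card K ^ n) = Algebra.trace K L x := by
  have := Algebra.trace_eq_of_algEquiv (frobeniusAlgEquivOfAlgebraic K L ^ n) x
  rwa [AlgEquiv.coe_pow, coe_frobeniusAlgEquivOfAlgebraic_iterate] at this

theorem FiniteField.exists_pow_card_pow_eq (n : ℕ) (x : L) :
    ∃ y : L, y ^ Fintype.card K ^ n = x := by
  obtain ⟨y, hy⟩ := (frobeniusAlgEquivOfAlgebraic K L ^ n).surjective x
  exact ⟨y, by rwa [AlgEquiv.coe_pow, coe_frobeniusAlgEquivOfAlgebraic_iterate] at hy⟩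

end Frobenius

section TraceCodeword

variable {F K : Type*} [CommRing F] [CommRing K] [Algebra (ZMod 2) F] [Algebra (ZMod 2) K]
  {α : K} {θ : F}

-- Coordinate `l : Fin N` carries the exponent `l + 1`, as in the paper's indexing `1, …, N`.
variable (α θ) in
noncomputable def traceCodeword (N : ℕ) (p : F × K) : Fin N → ZMod 2 := fun l =>
  Algebra.trace (ZMod 2) K (p.2 * α ^ ((l : ℕ) + 1)) +
    Algebra.trace (ZMod 2) F (p.1 * θ ^ ((l : ℕ) + 1))

theorem traceCodeword_add_one {N : ℕ} [NeZero N] (hα : orderOf α = N) (hθ : orderOf θ ∣ N)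
    (p : F × K) (l : Fin N) :
    traceCodeword α θ N p (l + 1) = traceCodeword α θ N (p.1 * θ, p.2 * α) l := by
  have hl : ((l + 1 : Fin N) : ℕ) + 1 ≡ (l + 1) + 1 [MOD N] :=
    (Fin.val_add_one_modEq l).add_right 1
  have hlα : ((l + 1 : Fin N) : ℕ) + 1 ≡ (l + 1) + 1 [MOD orderOf α] := by rwa [hα]
  simp only [traceCodeword]
  rw [pow_eq_pow_of_modEq_orderOf hlα, pow_eq_pow_of_modEq_orderOf (hl.of_dvd hθ),
    pow_succ α (_ + 1), pow_succ θ (_ + 1), ← mul_assoc, ← mul_assoc, mul_right_comm p.2,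
    mul_right_comm p.1]

end TraceCodeword

section Concatenation

variable {q : ℕ} {F K : Type*} [Field F] [Field K] [Algebra F K] {α : K} {θ : F}

theorem orderOf_eq_of_algebraMap_eq_pow (hα : orderOf α = q ^ 2 - 1)
    (hθ : algebraMap F K θ = α ^ (q + 1)) : orderOf θ = q - 1 := by
  rw [← orderOf_injective (algebraMap F K).toMonoidHom (algebraMap F K).injective θ]
  exact hθ ▸ orderOf_pow_add_one hα

variable [Fintype F] [Fintype K] [Algebra (ZMod 2) F] [Algebra (ZMod 2) K]

theorem trace_concat_eq [IsScalarTower (ZMod 2) F K] {m : ℕ} (hq : q = 2 ^ m)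
    (hα : orderOf α = q ^ 2 - 1) (hθ : algebraMap F K θ = α ^ (q + 1)) {j i l : ℕ}
    (hj : j ≡ l [MOD q + 1]) (hi : i ≡ l [MOD q - 1]) (c : F) (δ : K) :
    Algebra.trace (ZMod 2) F
        ((c + Algebra.trace F K (δ ^ 2 ^ (m + 1) * (α ^ (q - 1)) ^ j)) * θ ^ i) =
      Algebra.trace (ZMod 2) K (δ * α ^ l) + Algebra.trace (ZMod 2) F (c * θ ^ l) := by
  have hsum : q - 1 + (q + 1) = 2 ^ (m + 1) := by
    rw [pow_succ]; have := Nat.one_le_two_pow (n := m); omega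
  have hexp : (q - 1) * j + (q + 1) * i ≡ 2 ^ (m + 1) * l [MOD orderOf α] := by
    have h₁ := hj.mul_left' (q - 1)
    have h₂ := hi.mul_left' (q + 1)
    rw [mul_comm, Nat.add_one_mul_sub_one] at h₁
    rw [Nat.add_one_mul_sub_one] at h₂
    rw [hα, ← hsum, Nat.add_mul (q - 1)]
    exact h₁.add h₂
  have hfrob : δ ^ 2 ^ (m + 1) * (α ^ (q - 1)) ^ j * algebraMap F K (θ ^ i) =
      (δ * α ^ l) ^ Fintype.card (ZMod 2) ^ (m + 1) := by
    rw [ZMod.card, map_pow, hθ, ← pow_mul, ← pow_mul, mul_assoc, ← pow_add,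
      pow_eq_pow_of_modEq_orderOf hexp, mul_pow, ← pow_mul, mul_comm l]
  rw [Algebra.trace_add_trace_mul, hfrob, FiniteField.trace_pow_card_pow,
    pow_eq_pow_of_modEq_orderOf (x := θ) ((orderOf_eq_of_algebraMap_eq_pow hα hθ).symm ▸ hi)]

theorem eq_zero_of_forall_trace_pow_eq (hcF : Fintype.card F = q)
    (hcK : Fintype.card K = q ^ 2) (hq : Even q) (hα : orderOf α = q ^ 2 - 1)
    (hθ : algebraMap F K θ = α ^ (q + 1)) {c : F} {δ : K}
    (h : ∀ n : ℕ,
      Algebra.trace (ZMod 2) K (δ * α ^ n) = Algebra.trace (ZMod 2) F (c * θ ^ n)) :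
    c = 0 ∧ δ = 0 := by
  have hq2 : 2 ≤ q := hcF ▸ Fintype.one_lt_card
  have hθord := orderOf_eq_of_algebraMap_eq_pow hα hθ
  have hζ : IsPrimitiveRoot (α ^ (q - 1)) (q + 1) :=
    IsPrimitiveRoot.iff_orderOf.2 (orderOf_pow_sub_one hq2 hα)
  have hc : ∀ n : ℕ, Algebra.trace (ZMod 2) F (c * θ ^ n) = 0 := by
    intro n
    calc Algebra.trace (ZMod 2) F (c * θ ^ n)
        = ∑ s ∈ Finset.range (q + 1),
            Algebra.trace (ZMod 2) F (c * θ ^ (n + (q - 1) * s)) := by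
          simp only [pow_add, pow_mul, ← hθord, pow_orderOf_eq_one, one_pow, mul_one,
            Finset.sum_const, Finset.card_range, nsmul_eq_mul, Nat.cast_succ,
            (ZMod.natCast_eq_zero_iff_even).2 hq, zero_add, one_mul]
      _ = ∑ s ∈ Finset.range (q + 1),
            Algebra.trace (ZMod 2) K (δ * α ^ (n + (q - 1) * s)) := by
          simp only [h]
      _ = Algebra.trace (ZMod 2) K
            (δ * α ^ n * ∑ s ∈ Finset.range (q + 1), (α ^ (q - 1)) ^ s) := by
          simp only [Finset.mul_sum, map_sum, pow_add, pow_mul, mul_assoc]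
      _ = 0 := by rw [hζ.geom_sum_eq_zero (by omega), mul_zero, map_zero]
  exact ⟨eq_zero_of_forall_trace_mul_pow_eq_zero (hcF ▸ hθord) hc,
    eq_zero_of_forall_trace_mul_pow_eq_zero (hcK ▸ hα) fun n => (h n).trans (hc n)⟩

theorem traceCodeword_injective [NeZero (q ^ 2 - 1)] (hcF : Fintype.card F = q)
    (hcK : Fintype.card K = q ^ 2) (hq : Even q) (hα : orderOf α = q ^ 2 - 1)
    (hθ : algebraMap F K θ = α ^ (q + 1)) :
    Function.Injective (traceCodeword α θ (q ^ 2 - 1)) := by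
  rintro ⟨c₁, δ₁⟩ ⟨c₂, δ₂⟩ h
  have hθord := orderOf_eq_of_algebraMap_eq_pow hα hθ
  have hdiff : ∀ n : ℕ, Algebra.trace (ZMod 2) K ((δ₁ - δ₂) * α ^ n) =
      Algebra.trace (ZMod 2) F ((c₂ - c₁) * θ ^ n) := by
    intro n
    obtain ⟨l, hl⟩ := Fin.exists_val_add_one_modEq (N := q ^ 2 - 1) n
    have hl' := congrFun h l
    simp only [traceCodeword] at hl'
    have hlα : (l : ℕ) + 1 ≡ n [MOD orderOf α] := by rwa [hα]
    have hlθ : (l : ℕ) + 1 ≡ n [MOD orderOf θ] :=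
      hθord ▸ hl.of_dvd (Dvd.intro_left _ (Nat.add_one_mul_sub_one q))
    rw [pow_eq_pow_of_modEq_orderOf hlα, pow_eq_pow_of_modEq_orderOf hlθ] at hl'
    rw [sub_mul, sub_mul, map_sub, map_sub]
    linear_combination hl'
  obtain ⟨hc, hδ⟩ := eq_zero_of_forall_trace_pow_eq hcF hcK hq hα hθ hdiff
  rw [sub_eq_zero] at hc hδ
  rw [hc, hδ]

theorem image_concat_eq_preimage [IsScalarTower (ZMod 2) F K] {m : ℕ} (hq : q = 2 ^ m)
    (hα : orderOf α = q ^ 2 - 1) (hθ : algebraMap F K θ = α ^ (q + 1))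
    (Φ : (Fin (q + 1) → F) → (Fin (q + 1) × Fin (q - 1) → ZMod 2))
    (hΦ : ∀ (v : Fin (q + 1) → F) (ji : Fin (q + 1) × Fin (q - 1)),
      Φ v ji = Algebra.trace (ZMod 2) F (v ji.1 * θ ^ ((ji.2 : ℕ) + 1)))
    {e : Fin (q ^ 2 - 1) → Fin (q + 1) × Fin (q - 1)} (he : Function.Surjective e)
    (he1 : ∀ l, ((e l).1 : ℕ) + 1 ≡ (l : ℕ) + 1 [MOD q + 1])
    (he2 : ∀ l, ((e l).2 : ℕ) + 1 ≡ (l : ℕ) + 1 [MOD q - 1]) :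
    Φ '' {v | ∃ (c : F) (δ : K), ∀ j : Fin (q + 1),
        v j = c + Algebra.trace F K (δ * (α ^ (q - 1)) ^ ((j : ℕ) + 1))} =
      (· ∘ e) ⁻¹' Set.range (traceCodeword α θ (q ^ 2 - 1)) := by
  have hconcat (c : F) (δ : K) (l : Fin (q ^ 2 - 1)) :
      Φ (fun j => c + Algebra.trace F K (δ ^ 2 ^ (m + 1) * (α ^ (q - 1)) ^ ((j : ℕ) + 1)))
          (e l) =
        traceCodeword α θ (q ^ 2 - 1) (c, δ) l := by
    rw [hΦ]
    exact trace_concat_eq hq hα hθ (he1 l) (he2 l) c δ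
  ext w
  constructor
  · rintro ⟨v, ⟨c, δ, hv⟩, rfl⟩
    obtain ⟨δ', rfl⟩ : ∃ δ' : K, δ' ^ 2 ^ (m + 1) = δ := by
      simpa only [ZMod.card] using FiniteField.exists_pow_card_pow_eq (K := ZMod 2) (m + 1) δ
    refine ⟨(c, δ'), funext fun l => ?_⟩
    rw [← hconcat, ← funext hv]
    rfl
  · rintro ⟨⟨c, δ⟩, hw⟩
    refine ⟨_, ⟨c, δ ^ 2 ^ (m + 1), fun j => rfl⟩, funext fun ji => ?_⟩
    obtain ⟨l, rfl⟩ := he ji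
    exact (hconcat c δ l).trans (congrFun hw l)

end Concatenation

theorem stmt_7_general (m q : ℕ) (hq : q = 2 ^ m) [NeZero (q ^ 2 - 1)]
    (F K : Type) [Field F] [Field K] [Fintype F] [Fintype K]
    [Algebra (ZMod 2) F] [Algebra (ZMod 2) K] [Algebra F K] [IsScalarTower (ZMod 2) F K]
    (hcF : Fintype.card F = q) (hcK : Fintype.card K = q ^ 2)
    (α : K) (hα : orderOf α = q ^ 2 - 1)
    (ζ : K) (hζ : ζ = α ^ (q - 1))
    (θ : F) (hθ : algebraMap F K θ = α ^ (q + 1))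
    (Mdual : Set (Fin (q + 1) → F))
    (hM : Mdual = {w | ∃ (c : F) (δ : K), ∀ j : Fin (q + 1),
        w j = c + Algebra.trace F K (δ * ζ ^ ((j : ℕ) + 1))})
    (Φ : (Fin (q + 1) → F) → (Fin (q + 1) × Fin (q - 1) → ZMod 2))
    (hΦ : ∀ (v : Fin (q + 1) → F) (ji : Fin (q + 1) × Fin (q - 1)),
      Φ v ji = Algebra.trace (ZMod 2) F (v ji.1 * θ ^ ((ji.2 : ℕ) + 1)))
    (Kdual : Set (Fin (q ^ 2 - 1) → ZMod 2))
    (hK : Kdual = {w | ∃ (c : F) (δ : K), ∀ l : Fin (q ^ 2 - 1),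
        w l = Algebra.trace (ZMod 2) K (δ * α ^ ((l : ℕ) + 1))
            + Algebra.trace (ZMod 2) F (c * θ ^ ((l : ℕ) + 1))})
    (e : Fin (q ^ 2 - 1) → Fin (q + 1) × Fin (q - 1))
    (he1 : ∀ l, ((e l).1 : ℕ) + 1 ≡ (l : ℕ) + 1 [MOD q + 1])
    (he2 : ∀ l, ((e l).2 : ℕ) + 1 ≡ (l : ℕ) + 1 [MOD q - 1]) :
    Function.Bijective e ∧
    (∀ w : Fin (q + 1) × Fin (q - 1) → ZMod 2, w ∈ Φ '' Mdual ↔ (w ∘ e) ∈ Kdual) ∧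
    (Φ '' Mdual).ncard = 2 ^ (3 * m) ∧
    (∀ w ∈ Kdual, (fun l => w (l + 1)) ∈ Kdual) := by
  have hq2 : 2 ≤ q := hcF ▸ Fintype.one_lt_card
  have hqeven : Even q := hq ▸ Nat.even_pow.2 ⟨even_two, by rintro rfl; simp at hq; omega⟩
  have ebij : Function.Bijective e :=
    bijective_of_modEq_of_coprime (Nat.coprime_add_one_sub_one_of_even hqeven)
      (Nat.add_one_mul_sub_one q) e (fun l => (he1 l).add_right_cancel' 1)
      (fun l => (he2 l).add_right_cancel' 1)
  have hKdual : Kdual = Set.range (traceCodeword α θ (q ^ 2 - 1)) := by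
    rw [hK]
    ext w
    simp [traceCodeword, funext_iff, eq_comm]
  have hconcat : Φ '' Mdual = (· ∘ e) ⁻¹' Kdual := by
    subst hM hζ
    rw [hKdual]
    exact image_concat_eq_preimage hq hα hθ Φ hΦ ebij.2 he1 he2
  refine ⟨ebij, fun w => by rw [hconcat]; rfl, ?_, ?_⟩
  · rw [hconcat, Set.ncard_preimage_of_injective_subset_range ebij.2.injective_comp_right
      fun w _ => ebij.1.surjective_comp_right w, hKdual,
      Set.ncard_range_of_injective (traceCodeword_injective hcF hcK hqeven hα hθ),
      Nat.card_eq_fintype_card, Fintype.card_prod, hcF, hcK, hq]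
    ring
  · have hθdvd : orderOf θ ∣ q ^ 2 - 1 := by
      rw [orderOf_eq_of_algebraMap_eq_pow hα hθ]
      exact Dvd.intro_left _ (Nat.add_one_mul_sub_one q)
    rw [hKdual]
    rintro _ ⟨p, rfl⟩
    exact ⟨(p.1 * θ, p.2 * α), funext fun l => (traceCodeword_add_one hα hθdvd p l).symm⟩

/-- Let `m ≥ 1`, `q = 2^m`, `F = F_q ⊆ K = F_{q²}`, `α` primitive in `K`,
`ζ = α^{q−1}`, `θ = α^{q+1} ∈ F`.  Let `φ : F → F_2^{q−1}`, `φ(β) = (Tr_{q/2}(βθ^i))_i`,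
extended coordinatewise, and identify `{1,…,q²−1}` with pairs `(j,i)` via the Chinese
Remainder Theorem (any `e` satisfying the congruences below is such an identification and
is bijective).  Then the concatenation `φ(M_q^⊥)` corresponds, under this identification,
to `K_q^⊥ = {(Tr_{q²/2}(δα^l) + Tr_{q/2}(cθ^l))_l : c ∈ F, δ ∈ K}`; in particular
`φ(M_q^⊥)` has exactly `2^{3m}` codewords and `K_q^⊥` is invariant under the cyclic
coordinate shift, i.e. it is a binary cyclic code of length `q²−1` and dimension `3m`
with nonzeros `α`, `α^{1+q}`. -/
theorem stmt_7 (m q : ℕ) (hm : 1 ≤ m) (hq : q = 2 ^ m) [NeZero (q ^ 2 - 1)]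
    (F K : Type) [Field F] [Field K] [Fintype F] [Fintype K] [DecidableEq F]
    [Algebra (ZMod 2) F] [Algebra (ZMod 2) K] [Algebra F K] [IsScalarTower (ZMod 2) F K]
    (hcF : Fintype.card F = q) (hcK : Fintype.card K = q ^ 2)
    (α : K) (hα : orderOf α = q ^ 2 - 1)
    (ζ : K) (hζ : ζ = α ^ (q - 1))
    (θ : F) (hθ : algebraMap F K θ = α ^ (q + 1))
    (Mdual : Set (Fin (q + 1) → F))
    (hM : Mdual = {w | ∃ (c : F) (δ : K), ∀ j : Fin (q + 1),
        w j = c + Algebra.trace F K (δ * ζ ^ ((j : ℕ) + 1))})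
    (Φ : (Fin (q + 1) → F) → (Fin (q + 1) × Fin (q - 1) → ZMod 2))
    (hΦ : ∀ (v : Fin (q + 1) → F) (ji : Fin (q + 1) × Fin (q - 1)),
      Φ v ji = Algebra.trace (ZMod 2) F (v ji.1 * θ ^ ((ji.2 : ℕ) + 1)))
    (Kdual : Set (Fin (q ^ 2 - 1) → ZMod 2))
    (hK : Kdual = {w | ∃ (c : F) (δ : K), ∀ l : Fin (q ^ 2 - 1),
        w l = Algebra.trace (ZMod 2) K (δ * α ^ ((l : ℕ) + 1))
            + Algebra.trace (ZMod 2) F (c * θ ^ ((l : ℕ) + 1))})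
    (e : Fin (q ^ 2 - 1) → Fin (q + 1) × Fin (q - 1))
    (he1 : ∀ l, ((e l).1 : ℕ) + 1 ≡ (l : ℕ) + 1 [MOD q + 1])
    (he2 : ∀ l, ((e l).2 : ℕ) + 1 ≡ (l : ℕ) + 1 [MOD q - 1]) :
    Function.Bijective e ∧
    (∀ w : Fin (q + 1) × Fin (q - 1) → ZMod 2, w ∈ Φ '' Mdual ↔ (w ∘ e) ∈ Kdual) ∧
    (Φ '' Mdual).ncard = 2 ^ (3 * m) ∧
    (∀ w ∈ Kdual, (fun l => w (l + 1)) ∈ Kdual) :=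
  stmt_7_general m q hq F K hcF hcK α hα ζ hζ θ hθ Mdual hM Φ hΦ Kdual hK e he1 he2
end
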